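/- arXiv:2509.16815 — 14 statements merged into one kernel-verified Lean document; each statement's English description precedes it below -/
import Mathlib

section
/- Let G = (V,E) be a finite simple graph, k ≥ 1 an integer, and v a large-sparse vertex of G. Then for every feasible solution X for (G,k) with v ∉ X, the connected component of G − X containing v is a tree. -/
open SimpleGraph

/-- The number of edges of `G` with both endpoints in the neighborhood of `v`. -/
noncomputable def rho {V : Type*} (G : SimpleGraph V) (v : V) : ℕ :=
  {e : Sym2 V | e ∈ G.edgeSet ∧ ∀ x ∈ e, G.Adj v x}.ncard

/-- `v` is large-sparse: `|N(v)| > 7k` and `ρ(v) ≤ |N(v)|(|N(v)|−1)/4`. -/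
def LargeSparse {V : Type*} (G : SimpleGraph V) (k : ℕ) (v : V) : Prop :=
  7 * k < (G.neighborSet v).ncard ∧
    4 * rho G v ≤ (G.neighborSet v).ncard * ((G.neighborSet v).ncard - 1)

/-- `v` is large-dense: `|N(v)| > 7k` and `ρ(v) > |N(v)|(|N(v)|−1)/4`. -/
def LargeDense {V : Type*} (G : SimpleGraph V) (k : ℕ) (v : V) : Prop :=
  7 * k < (G.neighborSet v).ncard ∧
    (G.neighborSet v).ncard * ((G.neighborSet v).ncard - 1) < 4 * rho G v

/-- The connected component `c` of `H` is a clique. -/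
def CompIsClique {W : Type*} (H : SimpleGraph W) (c : H.ConnectedComponent) : Prop :=
  H.IsClique c.supp

/-- The connected component `c` of `H` is a tree. -/
def CompIsTree {W : Type*} (H : SimpleGraph W) (c : H.ConnectedComponent) : Prop :=
  (H.induce c.supp).IsTree

/-- Every connected component of `H` is a clique or a tree. -/
def CliquesOrTrees {W : Type*} (H : SimpleGraph W) : Prop :=
  ∀ c : H.ConnectedComponent, CompIsClique H c ∨ CompIsTree H c

/-- `X` is a feasible solution for `(G, k)`: `|X| ≤ k` and every connected component of
`G − X` is a clique or a tree. -/
def IsFeasible {V : Type*} (G : SimpleGraph V) (k : ℕ) (X : Set V) : Prop :=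
  X.ncard ≤ k ∧ CliquesOrTrees (G.induce (Xᶜ : Set V))

/-- if `v` is large-sparse and `X` is a feasible solution for `(G,k)` with
`v ∉ X`, then the connected component of `G − X` containing `v` is a tree. -/
theorem stmt_0 {V : Type*} [Fintype V] (G : SimpleGraph V) (k : ℕ) (hk : 1 ≤ k) (v : V)
    (hv : LargeSparse G k v) (X : Set V) (hX : IsFeasible G k X) (hvX : v ∉ X) :
    CompIsTree (G.induce (Xᶜ : Set V))
      ((G.induce (Xᶜ : Set V)).connectedComponentMk ⟨v, hvX⟩) := by
  classical
  set H := G.induce (Xᶜ : Set V) with hH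
  set c := H.connectedComponentMk ⟨v, hvX⟩ with hc
  rcases hX.2 c with hclq | htree
  · exfalso
    set n := (G.neighborSet v).ncard with hn
    set s : Finset V := (G.neighborFinset v).filter (fun u => u ∉ X) with hs
    set m := s.card with hm
    have hXfin : X.Finite := Set.toFinite X
    -- n ≤ m + k
    have hnk : n ≤ m + k := by
      have h1 : G.neighborFinset v ⊆ s ∪ hXfin.toFinset := by
        intro u hu
        by_cases hux : u ∈ X
        · exact Finset.mem_union_right _ (by simpa using hux)
        · exact Finset.mem_union_left _ (Finset.mem_filter.2 ⟨hu, hux⟩)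
      have h2 : n = (G.neighborFinset v).card := by
        rw [hn, neighborFinset_def, Set.ncard_eq_toFinset_card']
      have h3 : X.ncard ≤ k := hX.1
      have h4 : X.ncard = hXfin.toFinset.card := Set.ncard_eq_toFinset_card X hXfin
      calc n ≤ (s ∪ hXfin.toFinset).card := by rw [h2]; exact Finset.card_le_card h1
        _ ≤ m + hXfin.toFinset.card := Finset.card_union_le _ _
        _ ≤ m + k := by omega
    -- facts about members of s
    have hmem : ∀ u ∈ s, G.Adj v u ∧ u ∉ X := by
      intro u hu
      rw [hs, Finset.mem_filter, mem_neighborFinset] at hu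
      exact hu
    -- every member of s lies in the support of c
    have hsupp : ∀ u (hu : u ∈ s), (⟨u, (hmem u hu).2⟩ : (Xᶜ : Set V)) ∈ c.supp := by
      intro u hu
      have hadj : H.Adj ⟨u, (hmem u hu).2⟩ ⟨v, hvX⟩ := by
        simp only [hH, comap_adj, Function.Embedding.coe_subtype]
        exact ((hmem u hu).1).symm
      rw [ConnectedComponent.mem_supp_iff, hc]
      exact ConnectedComponent.sound hadj.reachable
    -- the image finset of edges inside s
    set F : Finset (Sym2 V) := s.offDiag.image (fun p => s(p.1, p.2)) with hF
    have hsub : (↑F : Set (Sym2 V)) ⊆ {e : Sym2 V | e ∈ G.edgeSet ∧ ∀ x ∈ e, G.Adj v x} := by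
      intro e he
      simp only [hF, Finset.coe_image, Set.mem_image, Finset.mem_coe,
        Finset.mem_offDiag] at he
      obtain ⟨⟨a, b⟩, ⟨ha, hb, hab⟩, rfl⟩ := he
      have hne : (⟨a, (hmem a ha).2⟩ : (Xᶜ : Set V)) ≠ ⟨b, (hmem b hb).2⟩ := by
        simp [Subtype.ext_iff]; exact hab
      have hadj : H.Adj ⟨a, (hmem a ha).2⟩ ⟨b, (hmem b hb).2⟩ :=
        hclq (hsupp a ha) (hsupp b hb) hne
      have hGab : G.Adj a b := by
        simpa only [hH, comap_adj, Function.Embedding.coe_subtype] using hadj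
      refine ⟨by exact hGab, ?_⟩
      intro x hx
      rcases Sym2.mem_iff.mp hx with rfl | rfl
      · exact (hmem x ha).1
      · exact (hmem x hb).1
    -- count: m*m - m ≤ 2 * F.card
    have hcount : s.offDiag.card ≤ 2 * F.card := by
      refine Finset.card_le_mul_card_image s.offDiag 2 ?_
      intro a ha
      obtain ⟨⟨u, w⟩, _, rfl⟩ := Finset.mem_image.mp ha
      have : s.offDiag.filter (fun p => s(p.1, p.2) = s(u, w)) ⊆ {(u, w), (w, u)} := by
        intro p hp
        obtain ⟨-, hpe⟩ := Finset.mem_filter.mp hp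
        rcases Sym2.eq_iff.mp hpe with ⟨h1, h2⟩ | ⟨h1, h2⟩
        · simp [Prod.ext_iff, h1, h2]
        · simp [Prod.ext_iff, h1, h2]
      calc (s.offDiag.filter (fun p => s(p.1, p.2) = s(u, w))).card
          ≤ ({(u, w), (w, u)} : Finset (V × V)).card := Finset.card_le_card this
        _ ≤ 2 := Finset.card_insert_le _ _ |>.trans (by simp)
    have hFr : F.card ≤ rho G v := by
      rw [rho, ← Set.ncard_coe_finset F]
      exact Set.ncard_le_ncard hsub (Set.toFinite _)
    have hoff : s.offDiag.card = m * m - m := Finset.offDiag_card s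
    have h5 : m * m - m ≤ 2 * rho G v := by
      rw [← hoff]; omega
    have h6 : m * m ≤ 2 * rho G v + m := by omega
    have h7 : 4 * rho G v ≤ n * (n - 1) := hv.2
    have h8 : 7 * k < n := hv.1
    clear_value n
    obtain ⟨n', rfl⟩ : ∃ n', n = n' + 1 := ⟨n - 1, by omega⟩
    have h7' : 4 * rho G v ≤ (n' + 1) * n' := by simpa using h7
    nlinarith [h6, h7', hnk, h8, hk]
  · exact htree
end

section
/- Let G = (V,E) be a finite simple graph, k ≥ 1 an integer, and v a large-dense vertex of G. Then for every feasible solution X for (G,k) with v ∉ X, the connected component of G − X containing v is a clique. -/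
open SimpleGraph

/-! If the component of `v` in `G − X` were a tree rather than a clique, it would contain no
triangle, so every edge inside `N(v)` would have an endpoint in `X ∩ N(v)`. Hence
`ρ(v) ≤ |X ∩ N(v)| · |N(v)| ≤ k |N(v)|`, while density together with `|N(v)| > 7k` gives
`ρ(v) > |N(v)|(|N(v)| - 1)/4 ≥ k |N(v)|`. -/

lemma CompIsTree.not_adj_of_adj_of_adj {W : Type*} {H : SimpleGraph W}
    {c : H.ConnectedComponent} (hc : CompIsTree H c) {a b d : W} (ha : a ∈ c.supp)
    (hab : H.Adj a b) (had : H.Adj a d) : ¬ H.Adj b d := by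
  classical
  intro hbd
  have hb : b ∈ c.supp := (ConnectedComponent.mem_supp_congr_adj c hab).mp ha
  have hd : d ∈ c.supp := (ConnectedComponent.mem_supp_congr_adj c had).mp ha
  have htriangle : (H.induce c.supp).IsNClique 3
      ({⟨a, ha⟩, ⟨b, hb⟩, ⟨d, hd⟩} : Finset c.supp) :=
    is3Clique_triple_iff.mpr ⟨hab, had, hbd⟩
  obtain ⟨_, w, hw, -⟩ := is3Clique_iff_exists_cycle_length_three.mp ⟨_, htriangle⟩
  exact hc.isAcyclic w hw

lemma exists_mem_of_compIsTree {V : Type*} {G : SimpleGraph V} {X : Set V} {v : V}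
    (hvX : v ∉ X)
    (htree : CompIsTree (G.induce (Xᶜ : Set V))
      ((G.induce (Xᶜ : Set V)).connectedComponentMk ⟨v, hvX⟩))
    {e : Sym2 V} (he : e ∈ G.edgeSet) (hev : ∀ x ∈ e, G.Adj v x) : ∃ x ∈ e, x ∈ X := by
  induction e using Sym2.ind with
  | _ u w =>
    by_contra! hout
    have hu : u ∉ X := hout u (Sym2.mem_mk_left u w)
    have hw : w ∉ X := hout w (Sym2.mem_mk_right u w)
    exact htree.not_adj_of_adj_of_adj (a := ⟨v, hvX⟩) (b := ⟨u, hu⟩) (d := ⟨w, hw⟩) rfl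
      (hev u (Sym2.mem_mk_left u w)) (hev w (Sym2.mem_mk_right u w)) he

lemma rho_le_of_forall_exists_mem {V : Type*} {G : SimpleGraph V} {v : V} {Y : Set V}
    (hN : (G.neighborSet v).Finite)
    (hY : ∀ e ∈ G.edgeSet, (∀ x ∈ e, G.Adj v x) → ∃ y ∈ e, y ∈ Y) :
    rho G v ≤ (Y ∩ G.neighborSet v).ncard * (G.neighborSet v).ncard := by
  set N := G.neighborSet v
  have hfin : ((Y ∩ N) ×ˢ N).Finite := (hN.subset Set.inter_subset_right).prod hN
  have hsub : {e : Sym2 V | e ∈ G.edgeSet ∧ ∀ x ∈ e, G.Adj v x} ⊆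
      (fun p : V × V => s(p.1, p.2)) '' ((Y ∩ N) ×ˢ N) := by
    rintro e ⟨he, hev⟩
    obtain ⟨y, hye, hyY⟩ := hY e he hev
    obtain ⟨z, rfl⟩ := Sym2.mem_iff_exists.mp hye
    exact ⟨(y, z), ⟨⟨hyY, hev y hye⟩, hev z (Sym2.mem_mk_right y z)⟩, rfl⟩
  calc rho G v ≤ ((fun p : V × V => s(p.1, p.2)) '' ((Y ∩ N) ×ˢ N)).ncard :=
        Set.ncard_le_ncard hsub (hfin.image _)
    _ ≤ ((Y ∩ N) ×ˢ N).ncard := Set.ncard_image_le hfin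
    _ = (Y ∩ N).ncard * N.ncard := Set.ncard_prod

lemma LargeDense.mul_ncard_lt_rho {V : Type*} {G : SimpleGraph V} {k : ℕ} {v : V}
    (hv : LargeDense G k v) : k * (G.neighborSet v).ncard < rho G v := by
  obtain ⟨hlarge, hdense⟩ := hv
  have h4k : 4 * k ≤ (G.neighborSet v).ncard - 1 := by omega
  have hmul := Nat.mul_le_mul_left (G.neighborSet v).ncard h4k
  nlinarith

theorem stmt_1_general {V : Type*} [Fintype V] (G : SimpleGraph V) (k : ℕ) (v : V)
    (hv : LargeDense G k v) (X : Set V) (hX : IsFeasible G k X) (hvX : v ∉ X) :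
    CompIsClique (G.induce (Xᶜ : Set V))
      ((G.induce (Xᶜ : Set V)).connectedComponentMk ⟨v, hvX⟩) := by
  obtain ⟨hcard, hcomponents⟩ := hX
  refine (hcomponents _).resolve_right fun htree => ?_
  have hrho := rho_le_of_forall_exists_mem (Set.toFinite (G.neighborSet v))
    fun _ he hev => exists_mem_of_compIsTree hvX htree he hev
  have hXN : (X ∩ G.neighborSet v).ncard ≤ k :=
    (Set.ncard_le_ncard Set.inter_subset_left (Set.toFinite X)).trans hcard
  have hkN := Nat.mul_le_mul_right (G.neighborSet v).ncard hXN
  exact absurd hv.mul_ncard_lt_rho (by omega)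

/-- if `v` is large-dense and `X` is a feasible solution for `(G,k)` with
`v ∉ X`, then the connected component of `G − X` containing `v` is a clique. -/
theorem stmt_1 {V : Type*} [Fintype V] (G : SimpleGraph V) (k : ℕ) (hk : 1 ≤ k) (v : V)
    (hv : LargeDense G k v) (X : Set V) (hX : IsFeasible G k X) (hvX : v ∉ X) :
    CompIsClique (G.induce (Xᶜ : Set V))
      ((G.induce (Xᶜ : Set V)).connectedComponentMk ⟨v, hvX⟩) :=
  stmt_1_general G k v hv X hX hvX
end

section
/- Let G = (V,E) be a finite simple graph, k ≥ 1 an integer, v ∈ V, and X a feasible solution for (G,k) with v ∉ X. If N(v) contains a set of k+2 pairwise adjacent vertices, then the connected component of G − X containing v is a clique. -/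
open SimpleGraph

lemma triangle_not_acyclic {W : Type*} (H : SimpleGraph W) {x y z : W}
    (hxy : H.Adj x y) (hyz : H.Adj y z) (hzx : H.Adj z x) : ¬ H.IsAcyclic := by
  intro h
  have hne1 := hxy.ne
  have hne2 := hyz.ne
  have hne3 := hzx.ne
  exact h (Walk.cons hxy (Walk.cons hyz (Walk.cons hzx Walk.nil))) (by
    constructor
    · constructor
      · simp [Walk.isTrail_def, Sym2.eq_iff]; aesop
      · simp
    · simp; aesop)

/-- if `N(v)` contains a clique of size `k+2`, then for any feasible solution `X`
with `v ∉ X`, the connected component of `G − X` containing `v` is a clique. -/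
theorem stmt_2 {V : Type*} [Fintype V] (G : SimpleGraph V) (k : ℕ) (hk : 1 ≤ k) (v : V)
    (X : Set V) (hX : IsFeasible G k X) (hvX : v ∉ X)
    (T : Set V) (hT : T ⊆ G.neighborSet v) (hTcard : T.ncard = k + 2)
    (hTclique : G.IsClique T) :
    CompIsClique (G.induce (Xᶜ : Set V))
      ((G.induce (Xᶜ : Set V)).connectedComponentMk ⟨v, hvX⟩) := by
  have hTfin : T.Finite := Set.toFinite T
  have h1 : T.ncard ≤ (T ∩ X).ncard + (T \ X).ncard := by
    rw [← Set.ncard_inter_add_ncard_diff_eq_ncard T X hTfin]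
  have h2 : (T ∩ X).ncard ≤ k :=
    le_trans (Set.ncard_le_ncard Set.inter_subset_right (Set.toFinite X)) hX.1
  obtain ⟨a, b, ha, hb, hab⟩ :=
    Set.one_lt_ncard_iff (s := T \ X) (Set.toFinite _) |>.mp (by omega)
  have hva : G.Adj v a := hT ha.1
  have hvb : G.Adj v b := hT hb.1
  have habAdj : G.Adj a b := hTclique ha.1 hb.1 hab
  set H := G.induce (Xᶜ : Set V) with hH
  let v' : (Xᶜ : Set V) := ⟨v, hvX⟩
  let a' : (Xᶜ : Set V) := ⟨a, ha.2⟩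
  let b' : (Xᶜ : Set V) := ⟨b, hb.2⟩
  have hva' : H.Adj v' a' := hva
  have hvb' : H.Adj v' b' := hvb
  have hab' : H.Adj a' b' := habAdj
  set c := H.connectedComponentMk v' with hc
  have hvc : v' ∈ c.supp := rfl
  have hac : a' ∈ c.supp := by
    simp only [ConnectedComponent.mem_supp_iff, hc]
    exact ConnectedComponent.sound hva'.symm.reachable
  have hbc : b' ∈ c.supp := by
    simp only [ConnectedComponent.mem_supp_iff, hc]
    exact ConnectedComponent.sound hvb'.symm.reachable
  rcases hX.2 c with h | h
  · exact h
  · exfalso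
    refine triangle_not_acyclic (H.induce c.supp)
      (x := ⟨v', hvc⟩) (y := ⟨a', hac⟩) (z := ⟨b', hbc⟩) hva' hab' hvb'.symm h.IsAcyclic
end

section
/- Let G = (V,E) be a finite simple graph, k ≥ 1 an integer, v ∈ V, and X a feasible solution for (G,k) with v ∉ X. If N(v) contains a set of k+2 pairwise non-adjacent vertices, then the connected component of G − X containing v is a tree. -/
open SimpleGraph

/-- if `N(v)` contains an independent set of size `k+2`, then for any feasible
solution `X` with `v ∉ X`, the connected component of `G − X` containing `v` is a tree. -/
theorem stmt_3 {V : Type*} [Fintype V] (G : SimpleGraph V) (k : ℕ) (hk : 1 ≤ k) (v : V)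
    (X : Set V) (hX : IsFeasible G k X) (hvX : v ∉ X)
    (T : Set V) (hT : T ⊆ G.neighborSet v) (hTcard : T.ncard = k + 2)
    (hTindep : T.Pairwise fun a b => ¬ G.Adj a b) :
    CompIsTree (G.induce (Xᶜ : Set V))
      ((G.induce (Xᶜ : Set V)).connectedComponentMk ⟨v, hvX⟩) := by
  obtain ⟨hXcard, hct⟩ := hX
  rcases hct ((G.induce (Xᶜ : Set V)).connectedComponentMk ⟨v, hvX⟩) with hclique | htree
  · exfalso
    have h2 : 1 < (T \ X).ncard := by
      have h3 : T.ncard ≤ (T \ X).ncard + X.ncard :=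
        Set.ncard_le_ncard_diff_add_ncard T X (Set.toFinite X)
      omega
    obtain ⟨a, b, ha, hb, hab⟩ := (Set.one_lt_ncard_iff (Set.toFinite _)).mp h2
    have haX : a ∈ (Xᶜ : Set V) := ha.2
    have hbX : b ∈ (Xᶜ : Set V) := hb.2
    have hadja : (G.induce (Xᶜ : Set V)).Adj ⟨v, hvX⟩ ⟨a, haX⟩ := hT ha.1
    have hadjb : (G.induce (Xᶜ : Set V)).Adj ⟨v, hvX⟩ ⟨b, hbX⟩ := hT hb.1
    have hamem : (⟨a, haX⟩ : (Xᶜ : Set V)) ∈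
        ((G.induce (Xᶜ : Set V)).connectedComponentMk ⟨v, hvX⟩).supp := by
      simp [ConnectedComponent.mem_supp_iff]
      exact hadja.symm.reachable
    have hbmem : (⟨b, hbX⟩ : (Xᶜ : Set V)) ∈
        ((G.induce (Xᶜ : Set V)).connectedComponentMk ⟨v, hvX⟩).supp := by
      simp [ConnectedComponent.mem_supp_iff]
      exact hadjb.symm.reachable
    have hne : (⟨a, haX⟩ : (Xᶜ : Set V)) ≠ ⟨b, hbX⟩ := by
      simpa using hab
    have := hclique hamem hbmem hne
    exact hTindep ha.1 hb.1 hab this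
  · exact htree
end

section
/- Let G = (V,E) be a finite simple graph, k ≥ 1 an integer, and v a large-sparse vertex of G. Suppose G contains k+1 cycles, each passing through v, such that no two of these cycles share a vertex other than v (i.e., a v-flower of order k+1). Then every feasible solution for (G,k) contains v. -/
/-!
Suppose `v ∉ X`. Since `|X| ≤ k` and the `k + 1` petals of the flower meet only in `v`, some
petal avoids `X`, so the component of `v` in `G − X` contains a cycle and is not a tree. If
instead that component is a clique, then so is `N(v) \ X`, a set of at least `|N(v)| − k`
neighbours; with `|N(v)| > 7k` this gives `ρ(v) ≥ C(|N(v)| − k, 2) > |N(v)|(|N(v)| − 1)/4`,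
contradicting sparseness.
-/

open SimpleGraph

namespace SimpleGraph

variable {V : Type*} {G : SimpleGraph V}

lemma Walk.IsCycle.induce {s : Set V} {u : V} {p : G.Walk u u} (hp : p.IsCycle)
    (hs : ∀ x ∈ p.support, x ∈ s) : (p.induce s hs).IsCycle := by
  rwa [← Walk.isCycle_map_iff_of_injective (f := (Embedding.induce s).toHom)
    Subtype.val_injective, Walk.map_induce]

lemma Walk.IsCycle.not_isAcyclic_induce_supp {u : V} {p : G.Walk u u} (hp : p.IsCycle) :
    ¬ (G.induce (G.connectedComponentMk u).supp).IsAcyclic := by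
  classical
  have hs : ∀ x ∈ p.support, x ∈ (G.connectedComponentMk u).supp := fun x hx =>
    ConnectedComponent.sound ⟨(p.takeUntil x hx).reverse⟩
  exact fun hacyc => hacyc _ (hp.induce hs)

lemma isClique_neighborSet_sdiff_of_compIsClique {X : Set V} {v : V} (hv : v ∉ X)
    (hcl : CompIsClique (G.induce Xᶜ) ((G.induce Xᶜ).connectedComponentMk ⟨v, hv⟩)) :
    G.IsClique (G.neighborSet v \ X) := by
  have hmem : ∀ a (ha : a ∈ G.neighborSet v \ X),
      (⟨a, ha.2⟩ : ↥Xᶜ) ∈ ((G.induce Xᶜ).connectedComponentMk ⟨v, hv⟩).supp :=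
    fun a ha =>
      ConnectedComponent.sound
        (Adj.reachable (show (G.induce Xᶜ).Adj ⟨v, hv⟩ ⟨a, ha.2⟩ from ha.1)).symm
  intro a ha b hb hab
  exact hcl (hmem a ha) (hmem b hb) (by simpa using hab)

lemma choose_two_ncard_le_rho_of_isClique [Finite V] {v : V} {T : Set V}
    (hT : T ⊆ G.neighborSet v) (hcl : G.IsClique T) : T.ncard.choose 2 ≤ rho G v := by
  classical
  have hsub : ↑(T.toFinite.toFinset.offDiag.image Sym2.mk.uncurry) ⊆
      {e : Sym2 V | e ∈ G.edgeSet ∧ ∀ x ∈ e, G.Adj v x} := by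
    simp only [Finset.coe_image, Set.image_subset_iff]
    rintro ⟨a, b⟩ hab
    simp only [Finset.mem_coe, Finset.mem_offDiag, Set.Finite.mem_toFinset] at hab
    obtain ⟨ha, hb, hne⟩ := hab
    refine ⟨hcl ha hb hne, fun x hx => ?_⟩
    rcases Sym2.mem_iff.mp hx with rfl | rfl
    exacts [hT ha, hT hb]
  calc T.ncard.choose 2
      = (↑(T.toFinite.toFinset.offDiag.image Sym2.mk.uncurry) : Set (Sym2 V)).ncard := by
        rw [Set.ncard_coe_finset, Sym2.card_image_offDiag, Set.ncard_eq_toFinset_card T]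
    _ ≤ rho G v := Set.ncard_le_ncard hsub

end SimpleGraph

lemma exists_disjoint_of_ncard_lt {V ι : Type*} [Fintype ι] {s : ι → Set V} {X : Set V} {v : V}
    (hdisj : ∀ i j, i ≠ j → ∀ x ∈ s i, x ∈ s j → x = v) (hv : v ∉ X) (hX : X.Finite)
    (hcard : X.ncard < Fintype.card ι) : ∃ i, Disjoint (s i) X := by
  by_contra! hmeet
  choose f hfs hfX using fun i => Set.not_disjoint_iff.mp (hmeet i)
  have hinj : Function.Injective f := fun i j hij => by
    by_contra hne
    exact hv (hdisj i j hne (f i) (hfs i) (hij ▸ hfs j) ▸ hfX i)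
  have := Set.ncard_le_ncard (Set.range_subset_iff.mpr hfX) hX
  rw [Set.ncard_range_of_injective hinj, Nat.card_eq_fintype_card] at this
  omega

lemma mul_pred_lt_four_mul_choose_two {k d n : ℕ} (hk : 1 ≤ k) (hd : 7 * k < d)
    (hn : d ≤ n + k) : d * (d - 1) < 4 * n.choose 2 := by
  have h2 : 2 * n.choose 2 = n * (n - 1) := by
    rw [Nat.choose_two_right, Nat.mul_div_cancel' (Nat.even_mul_pred_self n).two_dvd]
  have hn1 : 1 ≤ n := by omega
  zify [hn1, (by omega : 1 ≤ d)] at h2 hd hn ⊢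
  nlinarith

/-- if `v` is large-sparse and `G` contains a `v`-flower of order `k+1`
(that is, `k+1` cycles through `v` pairwise sharing no vertex other than `v`), then
every feasible solution for `(G,k)` contains `v`. -/
theorem stmt_4 {V : Type*} [Fintype V] (G : SimpleGraph V) (k : ℕ) (hk : 1 ≤ k) (v : V)
    (hv : LargeSparse G k v)
    (c : Fin (k + 1) → G.Walk v v) (hcyc : ∀ i, (c i).IsCycle)
    (hdisj : ∀ i j, i ≠ j →
      ∀ x, x ∈ (c i).support → x ∈ (c j).support → x = v)
    (X : Set V) (hX : IsFeasible G k X) :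
    v ∈ X := by
  by_contra hvX
  obtain ⟨i, hi⟩ := exists_disjoint_of_ncard_lt (s := fun i => {x | x ∈ (c i).support})
    hdisj hvX X.toFinite (by simpa using Nat.lt_succ_of_le hX.1)
  rcases hX.2 ((G.induce Xᶜ).connectedComponentMk ⟨v, hvX⟩) with hclique | htree
  · have hrho := choose_two_ncard_le_rho_of_isClique Set.sdiff_subset
      (isClique_neighborSet_sdiff_of_compIsClique hvX hclique)
    have hlost : (G.neighborSet v).ncard ≤ (G.neighborSet v \ X).ncard + k :=
      (Set.ncard_le_ncard_sdiff_add_ncard _ _ X.toFinite).trans (Nat.add_le_add_left hX.1 _)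
    have hmany := mul_pred_lt_four_mul_choose_two hk hv.1 hlost
    have hsparse := hv.2
    omega
  · exact ((hcyc i).induce fun x hx => Set.disjoint_left.mp hi hx).not_isAcyclic_induce_supp
      htree.2
end

section
/- Let G = (V,E) be a finite simple graph, k ≥ 1 an integer, and v a large-sparse vertex of G. Let B ⊆ V \ {v} with |B| ≤ 2k be such that no cycle of G − B passes through v. Let C be a connected component of G − ({v} ∪ B) such that the subgraph induced by C is a tree, C contains a neighbor of v, and no vertex of C has a neighbor in B. Then (G,k) admits a feasible solution if and only if (G − C, k) admits a feasible solution, where G − C is the subgraph of G induced by V \ C. -/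
open SimpleGraph

/-!
Since no cycle of `G − B` passes through `v`, the vertex `v` has exactly one neighbour `u` in the
tree `C`, and `vu` is the only edge between `C` and the rest of `G`. A solution of `(G, k)`
restricts to one of `(G − C, k)`. Conversely a solution `X` of `(G − C, k)` also solves `(G, k)`.
If `v ∈ X`, then `C` is a tree component of `G − X`. Otherwise let `D` be the component of `v` in
`G − C − X`. It cannot be a clique: its vertices outside `B ∪ {v}` are pairwise adjacent
neighbours of `v`, so there is at most one of them (two would span a triangle through `v`), and
then `|N(v)| ≤ |D \ {v}| + |{u}| + |X| ≤ (2k + 1) + 1 + k < 7k`. So `D` is a tree, and `D ∪ C`,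
two trees joined by the single edge `vu`, is a tree component of `G − X`.
-/

namespace SimpleGraph

variable {V : Type*} {G : SimpleGraph V}

noncomputable def induceInduceIso (G : SimpleGraph V) (S : Set V) (T : Set S) :
    (G.induce S).induce T ≃g G.induce (Subtype.val '' T) where
  toEquiv := Equiv.Set.image Subtype.val T Subtype.val_injective
  map_rel_iff' := Iff.rfl

lemma Walk.mem_of_mem_support_map_induce {S : Set V} {x y : S} (p : (G.induce S).Walk x y)
    {z : V} (hz : z ∈ (p.map (Embedding.induce S).toHom).support) : z ∈ S := by
  rw [Walk.support_map, List.mem_map] at hz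
  obtain ⟨z, -, rfl⟩ := hz
  exact z.2

lemma Walk.mem_of_forall_adj_mem {A T : Set V} (hA : ∀ x ∈ A, ∀ y ∈ T, G.Adj x y → y ∈ A) :
    ∀ {u w : V} (p : G.Walk u w), u ∈ A → (∀ y ∈ p.support, y ∈ T) → ∀ y ∈ p.support, y ∈ A
  | _, _, .nil, hu, _ => by simpa using hu
  | _, _, .cons h p, hu, hT => by
    simp only [support_cons, List.mem_cons, forall_eq_or_imp] at hT ⊢
    exact ⟨hu, mem_of_forall_adj_mem hA p (hA _ hu _ (hT.2 _ p.start_mem_support) h) hT.2⟩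

lemma Reachable.induce_of_forall_adj_mem {A T : Set V}
    (hA : ∀ x ∈ A, ∀ y ∈ T, G.Adj x y → y ∈ A) {x w : T} (hw : (w : V) ∈ A)
    (h : (G.induce T).Reachable x w) :
    ∃ hx : (x : V) ∈ A, (G.induce A).Reachable ⟨x, hx⟩ ⟨w, hw⟩ := by
  obtain ⟨p⟩ := h.symm
  set q := p.map (Embedding.induce T).toHom
  have hqT : ∀ y ∈ q.support, y ∈ T := fun _ => p.mem_of_mem_support_map_induce
  have hqA := q.mem_of_forall_adj_mem hA hw hqT
  exact ⟨hqA _ q.end_mem_support, (q.induce A hqA).reachable.symm⟩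

lemma ConnectedComponent.mem_image_supp_of_adj {S : Set V} {c : (G.induce S).ConnectedComponent}
    {x y : V} (hx : x ∈ Subtype.val '' c.supp) (hy : y ∈ S) (hxy : G.Adj x y) :
    y ∈ Subtype.val '' c.supp := by
  obtain ⟨x, hx, rfl⟩ := hx
  exact ⟨⟨y, hy⟩, c.mem_supp_of_adj_mem_supp hx hxy, rfl⟩

lemma ConnectedComponent.exists_walk_of_mem_image_supp {S : Set V}
    {c : (G.induce S).ConnectedComponent} {x y : V} (hx : x ∈ Subtype.val '' c.supp)
    (hy : y ∈ Subtype.val '' c.supp) : ∃ p : G.Walk x y, ∀ z ∈ p.support, z ∈ S := by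
  obtain ⟨x, hx, rfl⟩ := hx
  obtain ⟨y, hy, rfl⟩ := hy
  obtain ⟨p⟩ := c.reachable_of_mem_supp hx hy
  exact ⟨p.map (Embedding.induce S).toHom, fun _ => p.mem_of_mem_support_map_induce⟩

lemma isAcyclic_induce_union {S T : Set V} (hST : Disjoint S T) {a b : V}
    (hab : ∀ x ∈ S, ∀ y ∈ T, G.Adj x y → x = a ∧ y = b)
    (hS : (G.induce S).IsAcyclic) (hT : (G.induce T).IsAcyclic) :
    (G.induce (S ∪ T)).IsAcyclic := by
  classical
  intro w p hp
  set q := p.map (Embedding.induce (S ∪ T)).toHom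
  have hq : q.IsCycle := hp.map Subtype.val_injective
  have hqST : ∀ y ∈ q.support, y ∈ S ∪ T := fun _ => p.mem_of_mem_support_map_induce
  have hleaves : ∀ R : Set V, (G.induce R).IsAcyclic → ∃ y ∈ q.support, y ∉ R := by
    intro R hR
    by_contra! hqR
    exact hR _ ((Walk.isCycle_map_iff_of_injective Subtype.val_injective).1
      ((q.map_induce hqR).symm ▸ hq))
  obtain ⟨s, hsq, hsT⟩ := hleaves T hT
  obtain ⟨t, htq, htS⟩ := hleaves S hS
  have hs : s ∈ S := (hqST s hsq).resolve_right hsT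
  have ht : t ∈ T := (hqST t htq).resolve_left htS
  -- Rotated to start in `S`, the cycle has to leave `S` and come back, both times along `ab`.
  set r := q.rotate s hsq
  have hr : r.IsCycle := hq.rotate hsq
  have hrST : ∀ d ∈ r.darts, d.snd ∈ S ∪ T := fun d hd =>
    hqST _ ((q.mem_support_rotate_iff s hsq).1 (r.dart_snd_mem_support_of_mem_darts hd))
  have htr : t ∈ r.support := (q.mem_support_rotate_iff s hsq).2 htq
  obtain ⟨d₁, hd₁, hd₁S, hd₁S'⟩ := (r.takeUntil t htr).exists_boundary_dart S hs htS
  obtain ⟨d₂, hd₂, hd₂T, hd₂T'⟩ := (r.dropUntil t htr).exists_boundary_dart T ht hsT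
  replace hd₁ := r.darts_takeUntil_subset_darts htr hd₁
  replace hd₂ := r.darts_dropUntil_subset_darts htr hd₂
  obtain ⟨h₁a, h₁b⟩ := hab _ hd₁S _ ((hrST d₁ hd₁).resolve_left hd₁S') d₁.adj
  obtain ⟨h₂a, h₂b⟩ := hab _ ((hrST d₂ hd₂).resolve_right hd₂T') _ hd₂T d₂.adj.symm
  have hne : d₁ ≠ d₂ := fun h => hST.ne_of_mem hd₁S hd₂T (by rw [h])
  refine hne (List.inj_on_of_nodup_map hr.edges_nodup hd₁ hd₂ ?_)
  exact Sym2.eq_iff.2 (Or.inr ⟨h₁a.trans h₂a.symm, h₁b.trans h₂b.symm⟩)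

lemma isTree_induce_union {S T : Set V} (hST : Disjoint S T) {a b : V} (ha : a ∈ S)
    (hb : b ∈ T) (hadj : G.Adj a b) (hab : ∀ x ∈ S, ∀ y ∈ T, G.Adj x y → x = a ∧ y = b)
    (hS : (G.induce S).IsTree) (hT : (G.induce T).IsTree) : (G.induce (S ∪ T)).IsTree :=
  ⟨connected_induce_union hS.connected.preconnected hT.connected.preconnected ha hb hadj,
    isAcyclic_induce_union hST hab hS.isAcyclic hT.isAcyclic⟩

lemma exists_mem_support_of_isCycle {B : Set V} {v : V}
    (h : ∀ (w : ↥(Bᶜ : Set V)) (p : (G.induce (Bᶜ : Set V)).Walk w w),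
      p.IsCycle → ∀ x ∈ p.support, (x : V) ≠ v)
    {u : V} {p : G.Walk u u} (hp : p.IsCycle) (hv : v ∈ p.support) : ∃ z ∈ p.support, z ∈ B := by
  by_contra! hB
  refine h _ (p.induce Bᶜ hB) ?_ ⟨v, hB v hv⟩ (by simpa using hv) rfl
  exact (Walk.isCycle_map_iff_of_injective Subtype.val_injective).1 ((p.map_induce hB).symm ▸ hp)

lemma eq_of_adj_of_walk {B : Set V} {v : V} (hvB : v ∉ B)
    (hcyc : ∀ (u : V) (p : G.Walk u u), p.IsCycle → v ∈ p.support → ∃ z ∈ p.support, z ∈ B)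
    {x y : V} (hx : G.Adj v x) (hy : G.Adj v y) (p : G.Walk x y)
    (hp : ∀ z ∈ p.support, z ≠ v ∧ z ∉ B) : x = y := by
  classical
  by_contra hxy
  set q : G.Walk x y := (p.toPath : G.Walk x y)
  have hqp : q.support ⊆ p.support := p.support_toPath_subset_support
  have hvq : v ∉ q.support := fun hv => (hp v (hqp hv)).1 rfl
  have hcycle : (Walk.cons hy.symm (Walk.cons hx q)).IsCycle := by
    refine Path.cons_isCycle ⟨_, p.toPath.2.cons hvq⟩ hy.symm ?_
    rw [Walk.edges_cons, List.mem_cons, Sym2.eq_iff]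
    rintro ((⟨-, rfl⟩ | ⟨rfl, -⟩) | hyv)
    exacts [hx.ne rfl, hxy rfl, hvq (q.snd_mem_support_of_mem_edges hyv)]
  obtain ⟨z, hz, hzB⟩ := hcyc _ _ hcycle (by simp)
  simp only [Walk.support_cons, List.mem_cons] at hz
  rcases hz with rfl | rfl | hz
  exacts [(hp z p.end_mem_support).2 hzB, hvB hzB, (hp z (hqp hz)).2 hzB]

variable {B : Set V} {v : V}

lemma mem_or_eq_of_adj_of_mem_image_supp {c : (G.induce (({v} ∪ B)ᶜ : Set V)).ConnectedComponent}
    (hnoB : ∀ u ∈ c.supp, ∀ b ∈ B, ¬ G.Adj (u : V) b) {x y : V}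
    (hx : x ∈ Subtype.val '' c.supp) (hxy : G.Adj x y) : y ∈ Subtype.val '' c.supp ∨ y = v := by
  refine or_iff_not_imp_right.2 fun hyv => c.mem_image_supp_of_adj hx ?_ hxy
  obtain ⟨x, hx', rfl⟩ := hx
  rintro (hy | hy)
  exacts [hyv hy, hnoB x hx' y hy hxy]

lemma exists_neighborSet_inter_image_supp_eq_singleton (hvB : v ∉ B)
    (hcyc : ∀ (u : V) (p : G.Walk u u), p.IsCycle → v ∈ p.support → ∃ z ∈ p.support, z ∈ B)
    {c : (G.induce (({v} ∪ B)ᶜ : Set V)).ConnectedComponent} (hnbr : ∃ u ∈ c.supp, G.Adj v u) :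
    ∃ u, G.neighborSet v ∩ Subtype.val '' c.supp = {u} := by
  obtain ⟨u, hu, hvu⟩ := hnbr
  refine ⟨u, Set.eq_singleton_iff_unique_mem.2 ⟨⟨hvu, u, hu, rfl⟩, ?_⟩⟩
  rintro y ⟨hvy, hy⟩
  obtain ⟨p, hp⟩ := c.exists_walk_of_mem_image_supp hy ⟨u, hu, rfl⟩
  exact eq_of_adj_of_walk hvB hcyc hvy hvu p fun z hz => by simpa [not_or] using hp z hz

lemma ncard_neighborSet_le_of_isClique [Finite V] {D X : Set V} {u : V} (hvB : v ∉ B)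
    (hcyc : ∀ (u : V) (p : G.Walk u u), p.IsCycle → v ∈ p.support → ∃ z ∈ p.support, z ∈ B)
    (hD : G.IsClique D) (hvD : v ∈ D) (hN : G.neighborSet v ⊆ D ∪ insert u X) :
    (G.neighborSet v).ncard ≤ B.ncard + X.ncard + 2 := by
  -- Two vertices of `D` outside `B ∪ {v}` would span a triangle through `v`.
  have hDB : ((D \ {v}) \ B).ncard ≤ 1 := by
    refine (Set.ncard_le_one (Set.toFinite _)).2 fun a ⟨⟨haD, hav⟩, haB⟩ b ⟨⟨hbD, hbv⟩, hbB⟩ => ?_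
    by_contra hab
    refine hab (eq_of_adj_of_walk hvB hcyc (hD hvD haD (Ne.symm hav))
      (hD hvD hbD (Ne.symm hbv)) (hD haD hbD hab).toWalk ?_)
    simp only [Walk.support_cons, Walk.support_nil, List.mem_cons, List.not_mem_nil, or_false]
    rintro z (rfl | rfl)
    exacts [⟨hav, haB⟩, ⟨hbv, hbB⟩]
  have hsub : G.neighborSet v ⊆ ((D \ {v}) \ B) ∪ B ∪ insert u X := by
    intro x hx
    rcases hN hx with hxD | hxX
    · by_cases hxB : x ∈ B
      · exact Or.inl (Or.inr hxB)
      · exact Or.inl (Or.inl ⟨⟨hxD, (G.ne_of_adj hx).symm⟩, hxB⟩)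
    · exact Or.inr hxX
  calc (G.neighborSet v).ncard ≤ (((D \ {v}) \ B) ∪ B ∪ insert u X).ncard :=
        Set.ncard_le_ncard hsub
    _ ≤ ((D \ {v}) \ B).ncard + B.ncard + (insert u X).ncard :=
        (Set.ncard_union_le _ _).trans (Nat.add_le_add_right (Set.ncard_union_le _ _) _)
    _ ≤ B.ncard + X.ncard + 2 := by linarith [Set.ncard_insert_le u X]

end SimpleGraph

section CliquesOrTrees

variable {V W W' : Type*} {H : SimpleGraph W} {H' : SimpleGraph W'}

lemma compIsClique_or_compIsTree_of_embedding {c : H.ConnectedComponent}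
    {d : H'.ConnectedComponent} (f : c.toSimpleGraph ↪g d.toSimpleGraph)
    (hd : CompIsClique H' d ∨ CompIsTree H' d) : CompIsClique H c ∨ CompIsTree H c := by
  refine hd.imp (fun hd a ha b hb hab => ?_) fun hd => ⟨c.connected_toSimpleGraph, ?_⟩
  · have hne : f ⟨a, ha⟩ ≠ f ⟨b, hb⟩ := fun h => hab congr(Subtype.val $(f.injective h))
    exact f.map_adj_iff.1 (hd (f ⟨a, ha⟩).2 (f ⟨b, hb⟩).2 fun h => hne (Subtype.ext h))
  · exact hd.isAcyclic.embedding f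

lemma CliquesOrTrees.of_embedding (f : H ↪g H') (h : CliquesOrTrees H') : CliquesOrTrees H := by
  intro c
  induction c using ConnectedComponent.ind with | h w => ?_
  have hf : ∀ x ∈ (H.connectedComponentMk w).supp, f x ∈ (H'.connectedComponentMk (f w)).supp :=
    fun x hx => ConnectedComponent.sound ((ConnectedComponent.exact hx).map f.toHom)
  refine compIsClique_or_compIsTree_of_embedding
    { toFun := fun x => ⟨f x, hf x x.2⟩
      inj' := fun x y hxy => Subtype.ext (f.injective congr(Subtype.val $hxy))
      map_rel_iff' := f.map_adj_iff } (h _)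

lemma CliquesOrTrees.of_isAcyclic (h : H.IsAcyclic) : CliquesOrTrees H :=
  fun c => Or.inr (h.isTree_connectedComponent c)

variable {G : SimpleGraph V}

lemma CliquesOrTrees.induce_mono {S T : Set V} (hST : S ⊆ T)
    (h : CliquesOrTrees (G.induce T)) : CliquesOrTrees (G.induce S) :=
  h.of_embedding (induceHomOfLE G hST)

lemma CliquesOrTrees.compIsClique_or_compIsTree_of_forall_adj_mem {A T : Set V}
    (hA : ∀ x ∈ A, ∀ y ∈ T, G.Adj x y → y ∈ A) (h : CliquesOrTrees (G.induce A))
    {w : T} (hw : (w : V) ∈ A) :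
    CompIsClique _ ((G.induce T).connectedComponentMk w) ∨
      CompIsTree _ ((G.induce T).connectedComponentMk w) := by
  have hx : ∀ x ∈ ((G.induce T).connectedComponentMk w).supp,
      ∃ hx : (x : V) ∈ A, (G.induce A).Reachable ⟨x, hx⟩ ⟨w, hw⟩ :=
    fun x hx => Reachable.induce_of_forall_adj_mem hA hw (ConnectedComponent.exact hx)
  choose hxA hxr using hx
  refine compIsClique_or_compIsTree_of_embedding
    { toFun := fun x => ⟨⟨x, hxA x x.2⟩, ConnectedComponent.sound (hxr x x.2)⟩
      inj' := fun x y hxy => Subtype.ext (Subtype.ext (congrArg (fun z => (z.1.1 : V)) hxy))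
      map_rel_iff' := Iff.rfl } (h _)

lemma CliquesOrTrees.induce_union {S T : Set V} (hST : ∀ x ∈ S, ∀ y ∈ T, ¬ G.Adj x y)
    (hS : CliquesOrTrees (G.induce S)) (hT : CliquesOrTrees (G.induce T)) :
    CliquesOrTrees (G.induce (S ∪ T)) := by
  intro c
  induction c using ConnectedComponent.ind with | h w => ?_
  rcases w.2 with hw | hw
  · refine hS.compIsClique_or_compIsTree_of_forall_adj_mem (fun x hx y hy hxy => ?_) hw
    exact hy.resolve_right fun hy => hST x hx y hy hxy
  · refine hT.compIsClique_or_compIsTree_of_forall_adj_mem (fun x hx y hy hxy => ?_) hw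
    exact hy.resolve_left fun hy => hST y hy x hx hxy.symm

lemma cliquesOrTrees_induce_induce_iff (S : Set V) (T : Set S) :
    CliquesOrTrees ((G.induce S).induce T) ↔ CliquesOrTrees (G.induce (Subtype.val '' T)) :=
  ⟨fun h => h.of_embedding (induceInduceIso G S T).symm.toEmbedding,
    fun h => h.of_embedding (induceInduceIso G S T).toEmbedding⟩

lemma IsFeasible.induce [Finite V] {k : ℕ} {X : Set V} (h : IsFeasible G k X) (S : Set V) :
    IsFeasible (G.induce S) k (Subtype.val ⁻¹' X) := by
  refine ⟨?_, (cliquesOrTrees_induce_induce_iff _ _).2 (h.2.induce_mono ?_)⟩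
  · exact (Set.ncard_le_ncard_of_injOn Subtype.val (fun _ hx => hx)
      Subtype.val_injective.injOn).trans h.1
  · rintro _ ⟨x, hx, rfl⟩
    exact hx

lemma CliquesOrTrees.induce_diff_image {S : Set V} {Y : Set S}
    (h : CliquesOrTrees ((G.induce S).induce Yᶜ)) :
    CliquesOrTrees (G.induce (S \ Subtype.val '' Y)) := by
  refine ((cliquesOrTrees_induce_induce_iff _ _).1 h).induce_mono ?_
  rintro x ⟨hxS, hxY⟩
  exact ⟨⟨x, hxS⟩, fun hx => hxY ⟨_, hx, rfl⟩, rfl⟩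

end CliquesOrTrees

section Reduction

variable {V : Type*} {G : SimpleGraph V} {v : V} {C X : Set V}

lemma cliquesOrTrees_compl_of_forall_adj_mem {A : Set V}
    (hC : ∀ x ∈ C, ∀ y, G.Adj x y → y ∈ C ∨ y = v) (hXC : Disjoint X C) (hA : A ⊆ Cᶜ \ X)
    (hAadj : ∀ x ∈ A, ∀ y ∈ Cᶜ \ X, G.Adj x y → y ∈ A) (hvA : v ∈ X ∪ A)
    (hAC : CliquesOrTrees (G.induce (A ∪ C))) (h : CliquesOrTrees (G.induce (Cᶜ \ X))) :
    CliquesOrTrees (G.induce Xᶜ) := by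
  have hX : Xᶜ = (Cᶜ \ X) \ A ∪ (A ∪ C) := by
    ext x
    have := @hA x
    have := hXC.notMem_of_mem_right (a := x)
    simp only [Set.mem_compl_iff, Set.mem_union, Set.mem_sdiff] at *
    tauto
  rw [hX]
  refine (h.induce_mono Set.sdiff_subset).induce_union ?_ hAC
  rintro x ⟨⟨hxC, hxX⟩, hxA⟩ y (hyA | hyC) hxy
  · exact hxA (hAadj y hyA x ⟨hxC, hxX⟩ hxy.symm)
  · rcases hC y hyC x hxy.symm with hx | rfl
    exacts [hxC hx, hvA.elim hxX hxA]

theorem cliquesOrTrees_compl_of_cliquesOrTrees_diff [Finite V] {k : ℕ} {B : Set V} {u : V}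
    (hk : 1 ≤ k) (hv : 7 * k < (G.neighborSet v).ncard) (hB : B.ncard ≤ 2 * k) (hvB : v ∉ B)
    (hcyc : ∀ (u : V) (p : G.Walk u u), p.IsCycle → v ∈ p.support → ∃ z ∈ p.support, z ∈ B)
    (hvC : v ∉ C) (hCadj : ∀ x ∈ C, ∀ y, G.Adj x y → y ∈ C ∨ y = v)
    (hC : (G.induce C).IsTree) (hNC : G.neighborSet v ∩ C = {u}) (hXC : Disjoint X C)
    (hX : X.ncard ≤ k) (h : CliquesOrTrees (G.induce (Cᶜ \ X))) :
    CliquesOrTrees (G.induce Xᶜ) := by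
  by_cases hvX : v ∈ X
  · refine cliquesOrTrees_compl_of_forall_adj_mem hCadj hXC (Set.empty_subset _) (by simp)
      (Or.inl hvX) ?_ h
    rw [Set.empty_union]
    exact .of_isAcyclic hC.isAcyclic
  set c := (G.induce (Cᶜ \ X)).connectedComponentMk ⟨v, hvC, hvX⟩
  set D := Subtype.val '' c.supp
  have hvD : v ∈ D := ⟨_, rfl, rfl⟩
  have hDadj : ∀ x ∈ D, ∀ y ∈ Cᶜ \ X, G.Adj x y → y ∈ D := fun _ hx _ hy =>
    c.mem_image_supp_of_adj hx hy
  obtain ⟨⟨hvu, huC⟩, hNC⟩ := Set.eq_singleton_iff_unique_mem.1 hNC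
  rcases h c with hDcl | hDtree
  · have hN : G.neighborSet v ⊆ D ∪ insert u X := by
      intro x hvx
      by_cases hxC : x ∈ C
      · exact Or.inr (Or.inl (hNC x ⟨hvx, hxC⟩))
      by_cases hxX : x ∈ X
      · exact Or.inr (Or.inr hxX)
      exact Or.inl (hDadj v hvD x ⟨hxC, hxX⟩ hvx)
    have := ncard_neighborSet_le_of_isClique hvB hcyc (isClique_induce_iff.1 hDcl) hvD hN
    omega
  · have hDC : Disjoint D C := Set.disjoint_left.2 fun x hx => (Subtype.coe_image_subset _ _ hx).1
    have hcross : ∀ x ∈ D, ∀ y ∈ C, G.Adj x y → x = v ∧ y = u := by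
      intro x hx y hy hxy
      rcases hCadj y hy x hxy.symm with hxC | rfl
      exacts [(hDC.notMem_of_mem_left hx hxC).elim, ⟨rfl, hNC y ⟨hxy, hy⟩⟩]
    have hDCtree := isTree_induce_union hDC hvD huC hvu hcross
      ((induceInduceIso G _ _).isTree_iff.1 hDtree) hC
    exact cliquesOrTrees_compl_of_forall_adj_mem hCadj hXC (Subtype.coe_image_subset _ _) hDadj
      (Or.inr hvD) (.of_isAcyclic hDCtree.isAcyclic) h

end Reduction

/-- let `v` be large-sparse, `B ⊆ V \ {v}` with `|B| ≤ 2k` such that no cycle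
of `G − B` passes through `v`, and let `C` be a connected component of `G − ({v} ∪ B)`
inducing a tree, containing a neighbor of `v`, and with no vertex having a neighbor in `B`.
Then `(G,k)` is feasible iff `(G − C, k)` is feasible. -/
theorem stmt_6 {V : Type*} [Fintype V] (G : SimpleGraph V) (k : ℕ) (hk : 1 ≤ k) (v : V)
    (hv : LargeSparse G k v) (B : Set V) (hvB : v ∉ B) (hBcard : B.ncard ≤ 2 * k)
    (hnocycle : ∀ (w : ↥(Bᶜ : Set V)) (p : (G.induce (Bᶜ : Set V)).Walk w w),
      p.IsCycle → ∀ x ∈ p.support, (x : V) ≠ v)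
    (c : (G.induce (({v} ∪ B)ᶜ : Set V)).ConnectedComponent)
    (htree : CompIsTree (G.induce (({v} ∪ B)ᶜ : Set V)) c)
    (hnbr : ∃ u ∈ c.supp, G.Adj v (u : V))
    (hnoB : ∀ u ∈ c.supp, ∀ b ∈ B, ¬ G.Adj (u : V) b) :
    (∃ X : Set V, IsFeasible G k X) ↔
      (∃ Y : Set ↥((Subtype.val '' c.supp)ᶜ : Set V),
        IsFeasible (G.induce ((Subtype.val '' c.supp)ᶜ : Set V)) k Y) := by
  have hcyc : ∀ (u : V) (p : G.Walk u u), p.IsCycle → v ∈ p.support → ∃ z ∈ p.support, z ∈ B :=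
    fun _ _ => exists_mem_support_of_isCycle hnocycle
  obtain ⟨u, hNC⟩ := exists_neighborSet_inter_image_supp_eq_singleton hvB hcyc hnbr
  have hvC : v ∉ Subtype.val '' c.supp := fun ⟨x, _, hx⟩ => x.2 (Or.inl hx)
  refine ⟨fun ⟨X, hX⟩ => ⟨_, hX.induce _⟩, fun ⟨Y, hYk, hY⟩ => ⟨Subtype.val '' Y, ?_⟩⟩
  have hYk : (Subtype.val '' Y).ncard ≤ k :=
    (Set.ncard_image_of_injective Y Subtype.val_injective).trans_le hYk
  have hYC : Disjoint (Subtype.val '' Y) (Subtype.val '' c.supp) :=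
    Set.disjoint_left.2 fun _ ⟨y, _, hy⟩ => hy ▸ y.2
  exact ⟨hYk, cliquesOrTrees_compl_of_cliquesOrTrees_diff hk hv.1 hBcard hvB hcyc hvC
    (fun _ hx _ => mem_or_eq_of_adj_of_mem_image_supp hnoB hx)
    ((induceInduceIso G _ _).isTree_iff.1 htree) hNC hYC hYk hY.induce_diff_image⟩
end

section
/- Let G = (V,E) be a finite simple graph, k ≥ 1 an integer, and S ⊆ V with |S| ≤ 4k such that every connected component of G − S is a clique or a tree. Let v be a large-dense vertex of G with v ∉ S that lies in a connected component of G − S which is a tree. Then every feasible solution for (G,k) contains v. -/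
/-
If `v ∉ X`, look at the component of `v` in `G − X`. If it is a clique then, since
`|N(v)| > 7k ≥ |X| + |S| + 2`, two distinct neighbours of `v` outside `X ∪ S` are adjacent,
which puts a triangle through `v` into its tree component of `G − S`. If it is a tree, then
every edge inside `N(v)` meets `X ∩ N(v)`, so
`ρ(v) ≤ |X ∩ N(v)| · |N(v)| ≤ k |N(v)| ≤ |N(v)|(|N(v)| − 1)/4`, contradicting density.
-/

open SimpleGraph

section Components

variable {W : Type*} {H : SimpleGraph W} {c : H.ConnectedComponent} {x y z : W}

lemma CompIsTree.not_adj_of_adj (hc : CompIsTree H c) (hx : x ∈ c.supp)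
    (hxy : H.Adj x y) (hxz : H.Adj x z) : ¬ H.Adj y z := by
  classical
  intro hyz
  have hy : y ∈ c.supp := c.mem_supp_of_adj_mem_supp hx hxy
  have hz : z ∈ c.supp := c.mem_supp_of_adj_mem_supp hx hxz
  exact hc.isAcyclic.cliqueFree le_rfl
    {(⟨x, hx⟩ : c.supp), (⟨y, hy⟩ : c.supp), (⟨z, hz⟩ : c.supp)}
    (is3Clique_triple_iff.mpr ⟨hxy, hxz, hyz⟩)

lemma CompIsClique.adj_of_adj (hc : CompIsClique H c) (hx : x ∈ c.supp)
    (hxy : H.Adj x y) (hxz : H.Adj x z) (hyz : y ≠ z) : H.Adj y z :=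
  hc (c.mem_supp_of_adj_mem_supp hx hxy) (c.mem_supp_of_adj_mem_supp hx hxz) hyz

end Components

section Counting

variable {V : Type*} {G : SimpleGraph V} {k : ℕ} {v : V} {X : Set V}

lemma rho_le_of_forall_adj_mem [Finite V]
    (hX : ∀ a b, G.Adj a b → G.Adj v a → G.Adj v b → a ∈ X ∨ b ∈ X) :
    rho G v ≤ (X ∩ G.neighborSet v).ncard * (G.neighborSet v).ncard := by
  have hsub : {e : Sym2 V | e ∈ G.edgeSet ∧ ∀ x ∈ e, G.Adj v x} ⊆
      Function.uncurry Sym2.mk '' ((X ∩ G.neighborSet v) ×ˢ G.neighborSet v) := by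
    rintro e ⟨he, hN⟩
    induction e with
    | h a b =>
      have hva := hN a (Sym2.mem_mk_left a b)
      have hvb := hN b (Sym2.mem_mk_right a b)
      rcases hX a b he hva hvb with ha | hb
      · exact ⟨(a, b), ⟨⟨ha, hva⟩, hvb⟩, rfl⟩
      · exact ⟨(b, a), ⟨⟨hb, hvb⟩, hva⟩, Sym2.eq_swap⟩
  calc rho G v
      ≤ (Function.uncurry Sym2.mk '' ((X ∩ G.neighborSet v) ×ˢ G.neighborSet v)).ncard :=
        Set.ncard_le_ncard hsub
    _ ≤ ((X ∩ G.neighborSet v) ×ˢ G.neighborSet v).ncard := Set.ncard_image_le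
    _ = _ := Set.ncard_prod

lemma LargeDense.exists_adj_of_ncard_le [Finite V] (hv : LargeDense G k v) (hX : X.ncard ≤ k) :
    ∃ a b, G.Adj a b ∧ G.Adj v a ∧ G.Adj v b ∧ a ∉ X ∧ b ∉ X := by
  obtain ⟨hlarge, hdense⟩ := hv
  by_contra! hcover
  have hrho := rho_le_of_forall_adj_mem (X := X) fun a b hab hva hvb ↦
    or_iff_not_imp_left.mpr (hcover a b hab hva hvb)
  have hXN : (X ∩ G.neighborSet v).ncard ≤ k := (Set.ncard_inter_le_ncard_left _ _).trans hX
  set n := (G.neighborSet v).ncard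
  have : 4 * ((X ∩ G.neighborSet v).ncard * n) ≤ n * (n - 1) :=
    calc 4 * ((X ∩ G.neighborSet v).ncard * n) = 4 * (X ∩ G.neighborSet v).ncard * n := by ring
      _ ≤ (n - 1) * n := by gcongr; omega
      _ = n * (n - 1) := Nat.mul_comm _ _
  omega

end Counting

theorem stmt_7_general {V : Type*} [Fintype V] (G : SimpleGraph V) (k : ℕ) (hk : 1 ≤ k)
    (S : Set V) (hScard : S.ncard ≤ 4 * k)
    (v : V) (hv : LargeDense G k v) (hvS : v ∉ S)
    (hvtree : CompIsTree (G.induce (Sᶜ : Set V))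
      ((G.induce (Sᶜ : Set V)).connectedComponentMk ⟨v, hvS⟩))
    (X : Set V) (hX : IsFeasible G k X) :
    v ∈ X := by
  by_contra hvX
  obtain ⟨hXcard, hXcomp⟩ := hX
  rcases hXcomp ((G.induce (Xᶜ : Set V)).connectedComponentMk ⟨v, hvX⟩) with hclique | htree
  · have hmany : 1 < (G.neighborSet v \ (X ∪ S)).ncard := by
      have := Set.ncard_le_ncard_sdiff_add_ncard (G.neighborSet v) (X ∪ S)
      have := Set.ncard_union_le X S
      have := hv.1
      omega
    obtain ⟨a, ⟨hva, haXS⟩, b, ⟨hvb, hbXS⟩, hab⟩ :=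
      (Set.one_lt_ncard (Set.toFinite _)).mp hmany
    simp only [Set.mem_union, not_or] at haXS hbXS
    have hadj : G.Adj a b :=
      hclique.adj_of_adj (x := (⟨v, hvX⟩ : (Xᶜ : Set V))) (y := ⟨a, haXS.1⟩)
        (z := ⟨b, hbXS.1⟩) rfl hva hvb (Subtype.coe_ne_coe.mp hab)
    exact hvtree.not_adj_of_adj (x := (⟨v, hvS⟩ : (Sᶜ : Set V))) (y := ⟨a, haXS.2⟩)
      (z := ⟨b, hbXS.2⟩) rfl hva hvb hadj
  · obtain ⟨a, b, hab, hva, hvb, haX, hbX⟩ := hv.exists_adj_of_ncard_le hXcard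
    exact htree.not_adj_of_adj (x := (⟨v, hvX⟩ : (Xᶜ : Set V))) (y := ⟨a, haX⟩)
      (z := ⟨b, hbX⟩) rfl hva hvb hab

/-- let `S ⊆ V` with `|S| ≤ 4k` be such that every connected component of
`G − S` is a clique or a tree, and let `v` be a large-dense vertex with `v ∉ S` lying in
a tree component of `G − S`. Then every feasible solution for `(G,k)` contains `v`. -/
theorem stmt_7 {V : Type*} [Fintype V] (G : SimpleGraph V) (k : ℕ) (hk : 1 ≤ k)
    (S : Set V) (hScard : S.ncard ≤ 4 * k)
    (hS : CliquesOrTrees (G.induce (Sᶜ : Set V)))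
    (v : V) (hv : LargeDense G k v) (hvS : v ∉ S)
    (hvtree : CompIsTree (G.induce (Sᶜ : Set V))
      ((G.induce (Sᶜ : Set V)).connectedComponentMk ⟨v, hvS⟩))
    (X : Set V) (hX : IsFeasible G k X) :
    v ∈ X :=
  stmt_7_general G k hk S hScard v hv hvS hvtree X hX
end

section
/- Let G = (V,E) be a finite simple graph, k ≥ 1 an integer, and v1, v2, v3 three distinct large-dense vertices of G such that v1v2 ∈ E, v2v3 ∈ E, and v1v3 ∉ E (i.e., {v1,v2,v3} induces a P3). Then every feasible solution X for (G,k) satisfies X ∩ {v1,v2,v3} ≠ ∅. -/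
open SimpleGraph

/-!
A set `X` of at most `k` vertices meets at most `k·|N(v)|` of the edges inside `N(v)`, whereas a
large-dense `v` has `ρ(v) > |N(v)|(|N(v)|-1)/4 ≥ k·|N(v)|` of them. So some triangle through `v1`
survives in `G − X`, the component of `v1` is not a tree and must be a clique; but if `X` misses
the `P₃`, then `v3` lies in that component (through `v2`) without being adjacent to `v1`.
-/

section

variable {V : Type*}

lemma Set.ncard_le_mul_of_forall_sym2_mem {S : Set (Sym2 V)} {X N : Set V} (hN : N.Finite)
    (hSN : ∀ e ∈ S, ∀ x ∈ e, x ∈ N) (hSX : ∀ e ∈ S, ∃ x ∈ e, x ∈ X) :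
    S.ncard ≤ (X ∩ N).ncard * N.ncard := by
  have hS : S ⊆ (fun p : V × V ↦ s(p.1, p.2)) '' ((X ∩ N) ×ˢ N) := by
    intro e he
    obtain ⟨x, hxe, hxX⟩ := hSX e he
    refine ⟨(x, Sym2.Mem.other hxe), ⟨⟨hxX, hSN e he x hxe⟩, ?_⟩, Sym2.other_spec hxe⟩
    exact hSN e he _ (Sym2.other_mem hxe)
  have hfin : ((X ∩ N) ×ˢ N).Finite := (hN.subset Set.inter_subset_right).prod hN
  calc S.ncard ≤ ((fun p : V × V ↦ s(p.1, p.2)) '' ((X ∩ N) ×ˢ N)).ncard :=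
        Set.ncard_le_ncard hS (hfin.image _)
    _ ≤ ((X ∩ N) ×ˢ N).ncard := Set.ncard_image_le hfin
    _ = (X ∩ N).ncard * N.ncard := Set.ncard_prod

lemma rho_le_of_forall_triangle_mem (G : SimpleGraph V) (v : V) {X : Set V}
    (hN : (G.neighborSet v).Finite)
    (hX : ∀ a b, G.Adj v a → G.Adj v b → G.Adj a b → a ∈ X ∨ b ∈ X) :
    rho G v ≤ (X ∩ G.neighborSet v).ncard * (G.neighborSet v).ncard := by
  refine Set.ncard_le_mul_of_forall_sym2_mem hN (fun e he x hx ↦ he.2 x hx) ?_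
  rintro e ⟨hadj, hN⟩
  induction e using Sym2.ind with
  | _ a b =>
    rcases hX a b (hN a (Sym2.mem_mk_left a b)) (hN b (Sym2.mem_mk_right a b)) hadj with h | h
    · exact ⟨a, Sym2.mem_mk_left a b, h⟩
    · exact ⟨b, Sym2.mem_mk_right a b, h⟩

lemma LargeDense.exists_triangle_avoiding [Finite V] {G : SimpleGraph V} {k : ℕ} {v : V}
    (hd : LargeDense G k v) {X : Set V} (hX : X.ncard ≤ k) :
    ∃ a b, G.Adj v a ∧ G.Adj v b ∧ G.Adj a b ∧ a ∉ X ∧ b ∉ X := by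
  by_contra! h
  set n := (G.neighborSet v).ncard
  have hρ : rho G v ≤ k * n :=
    (rho_le_of_forall_triangle_mem G v (Set.toFinite _)
      fun a b ha hb hab ↦ or_iff_not_imp_left.mpr (h a b ha hb hab)).trans
      (Nat.mul_le_mul_right n ((Set.ncard_le_ncard Set.inter_subset_left).trans hX))
  have h4k : 4 * k ≤ n - 1 := by have := hd.1; omega
  have : 4 * rho G v ≤ n * (n - 1) :=
    calc 4 * rho G v ≤ 4 * k * n := by rw [mul_assoc]; exact Nat.mul_le_mul_left 4 hρ
      _ ≤ (n - 1) * n := Nat.mul_le_mul_right n h4k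
      _ = n * (n - 1) := Nat.mul_comm _ _
  exact absurd hd.2 this.not_gt

lemma not_compIsTree_of_triangle (H : SimpleGraph V) {v a b : V}
    (hva : H.Adj v a) (hvb : H.Adj v b) (hab : H.Adj a b) :
    ¬ CompIsTree H (H.connectedComponentMk v) := by
  classical
  intro ht
  have ha : a ∈ (H.connectedComponentMk v).supp :=
    (ConnectedComponent.connectedComponentMk_eq_of_adj hva).symm
  have hb : b ∈ (H.connectedComponentMk v).supp :=
    (ConnectedComponent.connectedComponentMk_eq_of_adj hvb).symm
  exact ht.isAcyclic.cliqueFree le_rfl {⟨v, rfl⟩, ⟨a, ha⟩, ⟨b, hb⟩}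
    (is3Clique_triple_iff.mpr ⟨by exact hva, by exact hvb, by exact hab⟩)

end

theorem stmt_8_general {V : Type*} [Fintype V] (G : SimpleGraph V) (k : ℕ)
    (v1 v2 v3 : V) (h13 : v1 ≠ v3)
    (hd1 : LargeDense G k v1)
    (ha12 : G.Adj v1 v2) (ha23 : G.Adj v2 v3) (hna13 : ¬ G.Adj v1 v3)
    (X : Set V) (hX : IsFeasible G k X) :
    X ∩ {v1, v2, v3} ≠ ∅ := by
  intro hempty
  have hout : ∀ w ∈ ({v1, v2, v3} : Set V), w ∈ Xᶜ := fun w hw hwX ↦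
    Set.eq_empty_iff_forall_notMem.mp hempty w ⟨hwX, hw⟩
  set H := G.induce (Xᶜ : Set V)
  let u1 : (Xᶜ : Set V) := ⟨v1, hout v1 (by simp)⟩
  let u2 : (Xᶜ : Set V) := ⟨v2, hout v2 (by simp)⟩
  let u3 : (Xᶜ : Set V) := ⟨v3, hout v3 (by simp)⟩
  obtain ⟨a, b, hva, hvb, hab, haX, hbX⟩ := hd1.exists_triangle_avoiding hX.1
  have hu12 : H.Adj u1 u2 := ha12
  have hu23 : H.Adj u2 u3 := ha23
  have hclique : CompIsClique H (H.connectedComponentMk u1) :=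
    (hX.2 _).resolve_right
      (not_compIsTree_of_triangle H (v := u1) (a := ⟨a, haX⟩) (b := ⟨b, hbX⟩) hva hvb hab)
  have hu3 : u3 ∈ (H.connectedComponentMk u1).supp :=
    (ConnectedComponent.connectedComponentMk_eq_of_adj hu12).trans
      (ConnectedComponent.connectedComponentMk_eq_of_adj hu23) |>.symm
  exact hna13 (hclique rfl hu3 (ne_of_apply_ne Subtype.val h13))

/-- if three distinct large-dense vertices induce a `P₃`, then every feasible
solution for `(G,k)` intersects them. -/
theorem stmt_8 {V : Type*} [Fintype V] (G : SimpleGraph V) (k : ℕ) (hk : 1 ≤ k)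
    (v1 v2 v3 : V) (h12 : v1 ≠ v2) (h23 : v2 ≠ v3) (h13 : v1 ≠ v3)
    (hd1 : LargeDense G k v1) (hd2 : LargeDense G k v2) (hd3 : LargeDense G k v3)
    (ha12 : G.Adj v1 v2) (ha23 : G.Adj v2 v3) (hna13 : ¬ G.Adj v1 v3)
    (X : Set V) (hX : IsFeasible G k X) :
    X ∩ {v1, v2, v3} ≠ ∅ :=
  stmt_8_general G k v1 v2 v3 h13 hd1 ha12 ha23 hna13 X hX
end

section
/- Let G = (V,E) be a finite simple graph, W ⊆ V, and let 𝒫 be a family of 3-element subsets of W, each inducing a P3 in G, such that any two distinct members of 𝒫 share at most one vertex, and such that 𝒫 is maximal with these properties (no 3-element subset of W inducing a P3 in G can be added to 𝒫 while keeping all pairwise intersections of size at most one). Let W' = W \ ⋃_{P∈𝒫} P. Then every connected component C of the subgraph of G induced by W' satisfies: (i) any two distinct vertices of C are adjacent in G, and (ii) for all u, v ∈ C, (N(u) ∩ W) ∪ {u} = (N(v) ∩ W) ∪ {v}. -/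
open SimpleGraph

/-- A 3-element subset of `W` inducing a `P₃` in `G`. -/
def IsP3Subset {V : Type*} (G : SimpleGraph V) (W : Set V) (P : Set V) : Prop :=
  ∃ v1 v2 v3 : V, P = {v1, v2, v3} ∧ P ⊆ W ∧
    v1 ≠ v2 ∧ v2 ≠ v3 ∧ v1 ≠ v3 ∧
    G.Adj v1 v2 ∧ G.Adj v2 v3 ∧ ¬ G.Adj v1 v3

/-- let `F` be a maximal family of 3-element subsets of `W`, each inducing a
`P₃` in `G`, pairwise sharing at most one vertex. Let `W' = W \ ⋃ F`. Then every connected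
component `C` of the subgraph induced by `W'` is a clique of `G` whose vertices all have the
same closed neighborhood within `W`. -/
theorem stmt_11 {V : Type*} [Fintype V] (G : SimpleGraph V) (W : Set V)
    (F : Set (Set V))
    (hP3 : ∀ P ∈ F, IsP3Subset G W P)
    (hpair : ∀ P ∈ F, ∀ Q ∈ F, P ≠ Q → (P ∩ Q).ncard ≤ 1)
    (hmax : ∀ Q : Set V, IsP3Subset G W Q → (∀ P ∈ F, Q ≠ P → (Q ∩ P).ncard ≤ 1) → Q ∈ F)
    (c : (G.induce ((W \ ⋃₀ F) : Set V)).ConnectedComponent) :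
    (∀ u ∈ c.supp, ∀ v ∈ c.supp, u ≠ v → G.Adj (u : V) (v : V)) ∧
    (∀ u ∈ c.supp, ∀ v ∈ c.supp,
      (G.neighborSet (u : V) ∩ W) ∪ {(u : V)} = (G.neighborSet (v : V) ∩ W) ∪ {(v : V)}) := by
  classical
  have hS : (W \ ⋃₀ F : Set V) = W \ ⋃₀ F := rfl
  -- No triple inside S forms a P3; in fact S-internal "paths" of length 2 close up.
  have key : ∀ a b c : V, a ∈ (W \ ⋃₀ F : Set V) → b ∈ (W \ ⋃₀ F : Set V) → c ∈ (W \ ⋃₀ F : Set V) → G.Adj a b → G.Adj b c → a ≠ c →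
      G.Adj a c := by
    intro a b c ha hb hc hab hbc hac
    by_contra hnadj
    have hQ : IsP3Subset G W ({a, b, c} : Set V) := by
      refine ⟨a, b, c, rfl, ?_, hab.ne, hbc.ne, hac, hab, hbc, hnadj⟩
      intro x hx
      simp only [Set.mem_insert_iff, Set.mem_singleton_iff] at hx
      rcases hx with rfl | rfl | rfl
      · exact ha.1
      · exact hb.1
      · exact hc.1
    have hmem : ({a, b, c} : Set V) ∈ F := by
      refine hmax _ hQ ?_
      intro P hP _
      have hempty : ({a, b, c} : Set V) ∩ P = ∅ := by
        ext x
        simp only [Set.mem_inter_iff, Set.mem_insert_iff, Set.mem_singleton_iff,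
          Set.mem_empty_iff_false, iff_false, not_and]
        rintro (rfl | rfl | rfl) hxP
        · exact ha.2 ⟨P, hP, hxP⟩
        · exact hb.2 ⟨P, hP, hxP⟩
        · exact hc.2 ⟨P, hP, hxP⟩
      simp [hempty]
    exact ha.2 ⟨_, hmem, by simp⟩
  -- Neighbors in W of one endpoint of an S-internal edge are neighbors of the other.
  have key2 : ∀ u v w : V, u ∈ (W \ ⋃₀ F : Set V) → v ∈ (W \ ⋃₀ F : Set V) → G.Adj u v → w ∈ W → G.Adj u w → w ≠ v →
      G.Adj v w := by
    intro u v w hu hv huv hwW huw hwv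
    by_contra hnadj
    have hQ : IsP3Subset G W ({w, u, v} : Set V) := by
      refine ⟨w, u, v, rfl, ?_, (G.adj_symm huw).ne, huv.ne, hwv,
        G.adj_symm huw, huv, fun h => hnadj (G.adj_symm h)⟩
      intro x hx
      simp only [Set.mem_insert_iff, Set.mem_singleton_iff] at hx
      rcases hx with rfl | rfl | rfl
      · exact hwW
      · exact hu.1
      · exact hv.1
    have hmem : ({w, u, v} : Set V) ∈ F := by
      refine hmax _ hQ ?_
      intro P hP _
      have hsub : ({w, u, v} : Set V) ∩ P ⊆ {w} := by
        intro x hx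
        rcases hx with ⟨hx1, hx2⟩
        simp only [Set.mem_insert_iff, Set.mem_singleton_iff] at hx1 ⊢
        rcases hx1 with rfl | rfl | rfl
        · rfl
        · exact absurd ⟨P, hP, hx2⟩ hu.2
        · exact absurd ⟨P, hP, hx2⟩ hv.2
      calc (({w, u, v} : Set V) ∩ P).ncard ≤ ({w} : Set V).ncard :=
            Set.ncard_le_ncard hsub (Set.finite_singleton w)
        _ = 1 := Set.ncard_singleton w
    exact hu.2 ⟨_, hmem, by simp⟩
  -- Walks in the induced graph give adjacency.
  have walk_adj : ∀ {x y : ↥(W \ ⋃₀ F : Set V)} (_ : (G.induce (W \ ⋃₀ F : Set V)).Walk x y), x ≠ y → G.Adj (x : V) (y : V) := by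
    intro x y p
    induction p with
    | nil => intro h; exact absurd rfl h
    | @cons a b d h q ih =>
      intro hxy
      by_cases hbd : b = d
      · subst hbd; exact h
      · exact key _ _ _ a.2 b.2 d.2 h (ih hbd)
          (fun he => hxy (Subtype.ext he))
  have adj_of_supp : ∀ u ∈ c.supp, ∀ v ∈ c.supp, u ≠ v → G.Adj (u : V) (v : V) := by
    intro u hu v hv huv
    rw [SimpleGraph.ConnectedComponent.mem_supp_iff] at hu hv
    have hr : (G.induce (W \ ⋃₀ F : Set V)).Reachable u v :=
      SimpleGraph.ConnectedComponent.exact (hu.trans hv.symm)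
    exact walk_adj hr.some huv
  refine ⟨adj_of_supp, ?_⟩
  have sub_lem : ∀ u v : ↥(W \ ⋃₀ F : Set V), G.Adj (u : V) (v : V) →
      (G.neighborSet (u : V) ∩ W) ∪ {(u : V)} ⊆ (G.neighborSet (v : V) ∩ W) ∪ {(v : V)} := by
    intro u v huv x hx
    rcases hx with hx | hx
    · rcases hx with ⟨hxu, hxW⟩
      by_cases hxv : x = (v : V)
      · exact Or.inr hxv
      · exact Or.inl ⟨key2 _ _ _ u.2 v.2 huv hxW hxu hxv, hxW⟩
    · rcases hx with rfl
      exact Or.inl ⟨G.adj_symm huv, u.2.1⟩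
  intro u hu v hv
  by_cases huv : u = v
  · subst huv; rfl
  · have h1 := adj_of_supp u hu v hv huv
    exact Set.Subset.antisymm (sub_lem u v h1) (sub_lem v u (G.adj_symm h1))
end

section
/- Let G = (V,E) be a finite simple graph, k ≥ 1 an integer, and Z ⊆ V with |Z| ≥ k+4 such that every vertex of Z is large-dense, any two distinct vertices of Z are adjacent in G, and all vertices z ∈ Z have the same closed neighborhood N(z) ∪ {z}. Then for any v ∈ Z, (G,k) admits a feasible solution if and only if (G − v, k) admits a feasible solution. -/
open SimpleGraph

/-!
Deleting a vertex preserves feasibility, because a connected induced subgraph of a graph whose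
components are cliques or trees is itself a clique or a tree. Conversely, let `Y` be a solution
for `G − v`. At most `k + 1` vertices of `Z` lie in `Y ∪ {v}`, so three of them, `z₁ z₂ z₃`,
survive in `G − v − Y`. Their triangle makes their component a clique `D`, and `D` is exactly
the neighbourhood of the true twin `v` of `z₁`, so putting `v` back only enlarges this clique.
-/

namespace SimpleGraph

variable {W W' : Type*} {A : SimpleGraph W} {B : SimpleGraph W'}

def Embedding.codRestrict (f : A ↪g B) (s : Set W') (h : ∀ a, f a ∈ s) : A ↪g B.induce s where
  toFun a := ⟨f a, h a⟩
  inj' _ _ hab := f.injective (congrArg Subtype.val hab)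
  map_rel_iff' := f.map_adj_iff

lemma ConnectedComponent.supp_subset_of_forall_adj_mem {c : A.ConnectedComponent} {K : Set W}
    (hK : ∀ x ∈ K, ∀ y, A.Adj x y → y ∈ K) {u : W} (hu : u ∈ c.supp) (huK : u ∈ K) :
    c.supp ⊆ K := by
  intro w hw
  obtain ⟨p⟩ := c.reachable_of_mem_supp hu hw
  induction p with
  | nil => exact huK
  | cons hadj _ ih => exact ih (c.mem_supp_of_adj_mem_supp hu hadj) (hK _ huK _ hadj) hw

lemma compIsClique_of_adj_of_adj_of_adj {e : B.ConnectedComponent}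
    (he : CompIsClique B e ∨ CompIsTree B e) {a b c : W'} (ha : a ∈ e.supp)
    (hab : B.Adj a b) (hbc : B.Adj b c) (hca : B.Adj c a) : CompIsClique B e := by
  classical
  refine he.resolve_right fun htree ↦ ?_
  have hb := e.mem_supp_of_adj_mem_supp ha hab
  have hc := e.mem_supp_of_adj_mem_supp hb hbc
  exact htree.isAcyclic.cliqueFree le_rfl {⟨a, ha⟩, ⟨b, hb⟩, ⟨c, hc⟩}
    (is3Clique_triple_iff.mpr
      ⟨induce_adj.mpr hab, induce_adj.mpr hca.symm, induce_adj.mpr hbc⟩)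

lemma CliquesOrTrees.eq_top_or_isTree_of_embedding (hB : CliquesOrTrees B) (hA : A.Connected)
    (f : A ↪g B) : A = ⊤ ∨ A.IsTree := by
  obtain ⟨a₀⟩ := hA.nonempty
  set e := B.connectedComponentMk (f a₀)
  have hmem : ∀ a, f a ∈ e.supp := fun a ↦
    ConnectedComponent.sound ((hA.preconnected a a₀).map f.toHom)
  rcases hB e with he | he
  · left
    ext a b
    refine ⟨fun hab ↦ hab.ne, fun hab ↦ ?_⟩
    exact f.map_adj_iff.mp (he (hmem a) (hmem b) (f.injective.ne hab))
  · exact Or.inr ⟨hA, he.isAcyclic.embedding (f.codRestrict e.supp hmem)⟩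

lemma CliquesOrTrees.comap (hB : CliquesOrTrees B) (f : A ↪g B) : CliquesOrTrees A := fun c ↦
  (hB.eq_top_or_isTree_of_embedding c.connected_toSimpleGraph
    (f.comp (Embedding.induce c.supp))).imp induce_eq_top.mp id

lemma CliquesOrTrees.of_induce_compl_singleton {v : W} (h : CliquesOrTrees (A.induce {v}ᶜ))
    (hv : A.IsClique (A.connectedComponentMk v).supp) : CliquesOrTrees A := by
  intro c
  by_cases hvc : v ∈ c.supp
  · exact Or.inl (c.mem_supp_iff v |>.mp hvc ▸ hv)
  · exact (h.eq_top_or_isTree_of_embedding c.connected_toSimpleGraph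
      (A.induceHomOfLE fun x hx hxv ↦ hvc (hxv ▸ hx))).imp induce_eq_top.mp id

lemma isClique_supp_connectedComponentMk_of_twin {v z₁ z₂ z₃ : W}
    (h : CliquesOrTrees (A.induce {v}ᶜ)) (hz₁ : z₁ ≠ v) (hz₂ : z₂ ≠ v) (hz₃ : z₃ ≠ v)
    (h₁₂ : A.Adj z₁ z₂) (h₂₃ : A.Adj z₂ z₃) (h₃₁ : A.Adj z₃ z₁)
    (htwin : A.neighborSet v ∪ {v} = A.neighborSet z₁ ∪ {z₁}) :
    A.IsClique (A.connectedComponentMk v).supp := by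
  set d := (A.induce {v}ᶜ).connectedComponentMk ⟨z₁, hz₁⟩
  set D : Set W := Subtype.val '' d.supp
  have hd : CompIsClique _ d := compIsClique_of_adj_of_adj_of_adj (h d) (a := ⟨z₁, hz₁⟩)
    (b := ⟨z₂, hz₂⟩) (c := ⟨z₃, hz₃⟩) rfl h₁₂ h₂₃ h₃₁
  have hDclique : A.IsClique D := by
    rintro _ ⟨x, hx, rfl⟩ _ ⟨y, hy, rfl⟩ hxy
    exact hd hx hy (Subtype.coe_ne_coe.mp hxy)
  have hDclosed : ∀ x ∈ D, ∀ y, A.Adj x y → y ≠ v → y ∈ D := by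
    rintro _ ⟨x, hx, rfl⟩ y hxy hyv
    exact ⟨⟨y, hyv⟩, d.mem_supp_of_adj_mem_supp hx hxy, rfl⟩
  have hz₁D : z₁ ∈ D := ⟨_, rfl, rfl⟩
  have hvD : v ∉ D := by rintro ⟨x, -, hx⟩; exact x.2 hx
  have hadj_iff : ∀ y, y ≠ v → (A.Adj v y ↔ y = z₁ ∨ A.Adj z₁ y) := by
    intro y hy
    simpa [hy] using congrArg (y ∈ ·) htwin
  have hneighbor : ∀ y, A.Adj v y ↔ y ∈ D := by
    refine fun y ↦ ⟨fun hvy ↦ ?_, fun hy ↦ ?_⟩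
    · rcases (hadj_iff y hvy.ne').mp hvy with rfl | hz₁y
      exacts [hz₁D, hDclosed z₁ hz₁D y hz₁y hvy.ne']
    · have hyv : y ≠ v := fun hyv ↦ hvD (hyv ▸ hy)
      exact (hadj_iff y hyv).mpr ((eq_or_ne y z₁).imp id (hDclique hz₁D hy ·.symm))
  refine (hDclique.insert fun y hy _ ↦ (hneighbor y).mpr hy).subset
    (ConnectedComponent.supp_subset_of_forall_adj_mem ?_ rfl (Set.mem_insert v D))
  rintro x (rfl | hx) y hxy
  · exact Or.inr ((hneighbor y).mp hxy)
  · exact (eq_or_ne y v).imp id (hDclosed x hx y hxy)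

lemma induce_neighborSet_union_singleton_eq {s : Set W} {a b : s}
    (h : A.neighborSet a ∪ {(a : W)} = A.neighborSet b ∪ {(b : W)}) :
    (A.induce s).neighborSet a ∪ {a} = (A.induce s).neighborSet b ∪ {b} := by
  ext y
  simpa [Subtype.ext_iff] using congrArg ((y : W) ∈ ·) h

end SimpleGraph

section Feasible

variable {V : Type*} {G : SimpleGraph V} {k : ℕ}

lemma IsFeasible.preimage_val [Finite V] {X : Set V} (hX : IsFeasible G k X) (s : Set V) :
    IsFeasible (G.induce s) k (Subtype.val ⁻¹' X) :=
  ⟨(Set.ncard_le_ncard_of_injOn Subtype.val (fun _ ha ↦ ha) Subtype.val_injective.injOn).trans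
      hX.1,
    hX.2.comap (((Embedding.induce s).comp (Embedding.induce _)).codRestrict Xᶜ fun a ↦ a.2)⟩

lemma IsFeasible.image_val_of_twin {v z₁ z₂ z₃ : V} {Y : Set ({v}ᶜ : Set V)}
    (hY : IsFeasible (G.induce {v}ᶜ) k Y) (hz₁ : z₁ ∉ insert v (Subtype.val '' Y))
    (hz₂ : z₂ ∉ insert v (Subtype.val '' Y)) (hz₃ : z₃ ∉ insert v (Subtype.val '' Y))
    (h₁₂ : G.Adj z₁ z₂) (h₂₃ : G.Adj z₂ z₃) (h₃₁ : G.Adj z₃ z₁)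
    (htwin : G.neighborSet v ∪ {v} = G.neighborSet z₁ ∪ {z₁}) :
    IsFeasible G k (Subtype.val '' Y) := by
  set X := Subtype.val '' Y
  have hvX : v ∉ X := by rintro ⟨y, -, hy⟩; exact y.2 hy
  set v' : ↥Xᶜ := ⟨v, hvX⟩
  refine ⟨(Set.ncard_image_of_injective _ Subtype.val_injective).trans_le hY.1, ?_⟩
  have hY' : CliquesOrTrees ((G.induce Xᶜ).induce {v'}ᶜ) := hY.2.comap
    ((((Embedding.induce Xᶜ).comp (Embedding.induce {v'}ᶜ)).codRestrict {v}ᶜ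
      fun a hav ↦ a.2 (Subtype.ext hav)).codRestrict Yᶜ fun a hay ↦ a.1.2 ⟨_, hay, rfl⟩)
  rw [Set.mem_insert_iff, not_or] at hz₁ hz₂ hz₃
  refine hY'.of_induce_compl_singleton (isClique_supp_connectedComponentMk_of_twin hY'
    (z₁ := ⟨z₁, hz₁.2⟩) (z₂ := ⟨z₂, hz₂.2⟩) (z₃ := ⟨z₃, hz₃.2⟩) (Subtype.coe_ne_coe.mp hz₁.1)
    (Subtype.coe_ne_coe.mp hz₂.1) (Subtype.coe_ne_coe.mp hz₃.1) h₁₂ h₂₃ h₃₁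
    (induce_neighborSet_union_singleton_eq htwin))

end Feasible

theorem stmt_14_general {V : Type*} [Fintype V] (G : SimpleGraph V) (k : ℕ)
    (Z : Set V) (hZcard : k + 4 ≤ Z.ncard)
    (hZclique : G.IsClique Z)
    (hZnbhd : ∀ z ∈ Z, ∀ w ∈ Z,
      G.neighborSet z ∪ {z} = G.neighborSet w ∪ {w})
    (v : V) (hvZ : v ∈ Z) :
    (∃ X : Set V, IsFeasible G k X) ↔
      (∃ Y : Set ↥(({v}ᶜ : Set V)), IsFeasible (G.induce ({v}ᶜ : Set V)) k Y) := by
  refine ⟨fun ⟨X, hX⟩ ↦ ⟨_, hX.preimage_val _⟩, fun ⟨Y, hY⟩ ↦ ⟨Subtype.val '' Y, ?_⟩⟩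
  have hcard : 2 < (Z \ insert v (Subtype.val '' Y)).ncard := by
    have hsdiff := Set.le_ncard_sdiff (insert v (Subtype.val '' Y)) Z
    have hinsert := Set.ncard_insert_le v (Subtype.val '' Y)
    rw [Set.ncard_image_of_injective _ Subtype.val_injective] at hinsert
    have hYcard := hY.1
    omega
  obtain ⟨z₁, ⟨hz₁Z, hz₁⟩, z₂, ⟨hz₂Z, hz₂⟩, z₃, ⟨hz₃Z, hz₃⟩, h₁₂, h₁₃, h₂₃⟩ :=
    (Set.two_lt_ncard).mp hcard
  exact hY.image_val_of_twin hz₁ hz₂ hz₃ (hZclique hz₁Z hz₂Z h₁₂) (hZclique hz₂Z hz₃Z h₂₃)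
    (hZclique hz₃Z hz₁Z h₁₃.symm) (hZnbhd v hvZ z₁ hz₁Z)

/-- let `Z` be a clique of at least `k+4` large-dense vertices all having the
same closed neighborhood. Then for any `v ∈ Z`, `(G,k)` admits a feasible solution iff
`(G − v, k)` does. -/
theorem stmt_14 {V : Type*} [Fintype V] (G : SimpleGraph V) (k : ℕ) (hk : 1 ≤ k)
    (Z : Set V) (hZcard : k + 4 ≤ Z.ncard)
    (hZdense : ∀ z ∈ Z, LargeDense G k z)
    (hZclique : G.IsClique Z)
    (hZnbhd : ∀ z ∈ Z, ∀ w ∈ Z,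
      G.neighborSet z ∪ {z} = G.neighborSet w ∪ {w})
    (v : V) (hvZ : v ∈ Z) :
    (∃ X : Set V, IsFeasible G k X) ↔
      (∃ Y : Set ↥(({v}ᶜ : Set V)), IsFeasible (G.induce ({v}ᶜ : Set V)) k Y) :=
  stmt_14_general G k Z hZcard hZclique hZnbhd v hvZ
end

section
/- Let G = (V,E) be a finite simple graph, k ≥ 1 an integer, and v a large-dense vertex of G such that some subset T ⊆ N(v) with |T| ≥ 2k+4 induces an acyclic subgraph (a forest) in G. Then every feasible solution for (G,k) contains v. -/
open SimpleGraph

lemma no_triangle_of_acyclic {W : Type*} {H : SimpleGraph W} (hH : H.IsAcyclic) {a b c : W}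
    (hab : H.Adj a b) (hbc : H.Adj b c) (hac : H.Adj a c) : False := by
  refine hH (Walk.cons hab (Walk.cons hbc (Walk.cons hac.symm Walk.nil))) ?_
  simp [Walk.isCycle_def, Walk.isTrail_def, hab.ne, hbc.ne, hac.ne, hab.ne', hbc.ne',
    hac.ne', Sym2.eq_iff]

lemma exists_edge_avoiding {V : Type*} [Fintype V] (G : SimpleGraph V) (k : ℕ) (hk : 1 ≤ k)
    (v : V) (hn : 7 * k < (G.neighborSet v).ncard)
    (hd : (G.neighborSet v).ncard * ((G.neighborSet v).ncard - 1) < 4 * rho G v)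
    (X : Set V) (hXk : X.ncard ≤ k) :
    ∃ u w, u ∈ G.neighborSet v ∧ w ∈ G.neighborSet v ∧ G.Adj u w ∧ u ∉ X ∧ w ∉ X := by
  by_contra hcon
  push_neg at hcon
  set E := {e : Sym2 V | e ∈ G.edgeSet ∧ ∀ x ∈ e, G.Adj v x} with hE
  have hmeet : ∀ e ∈ E, ∃ x ∈ e, x ∈ X := by
    intro e he
    induction e with
    | h a b =>
      have hadj : G.Adj a b := he.1
      have ha : a ∈ G.neighborSet v := he.2 a (by simp)
      have hb : b ∈ G.neighborSet v := he.2 b (by simp)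
      by_contra h
      push_neg at h
      exact (h b (by simp)) (hcon a b ha hb hadj (h a (by simp)))
  classical
  set f : Sym2 V → V × V := fun e =>
    if h : ∃ x ∈ e, x ∈ X then (h.choose, Sym2.Mem.other h.choose_spec.1) else (v, v) with hf
  have hmaps : ∀ e ∈ E, f e ∈ X ×ˢ (G.neighborSet v) := by
    intro e he
    have h := hmeet e he
    simp only [hf, dif_pos h]
    refine Set.mk_mem_prod h.choose_spec.2 ?_
    exact he.2 _ (Sym2.other_mem h.choose_spec.1)
  have hinj : Set.InjOn f E := by
    intro e1 h1 e2 h2 heq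
    have m1 := hmeet e1 h1
    have m2 := hmeet e2 h2
    simp only [hf, dif_pos m1, dif_pos m2, Prod.mk.injEq] at heq
    have r1 := Sym2.other_spec m1.choose_spec.1
    have r2 := Sym2.other_spec m2.choose_spec.1
    rw [← r1, ← r2]
    exact congrArg₂ (fun a b => s(a, b)) heq.1 heq.2
  have hle : E.ncard ≤ (X ×ˢ (G.neighborSet v)).ncard :=
    Set.ncard_le_ncard_of_injOn f hmaps hinj (Set.toFinite _)
  have hprod : (X ×ˢ (G.neighborSet v)).ncard = X.ncard * (G.neighborSet v).ncard := by
    rw [← Nat.card_coe_set_eq, ← Nat.card_coe_set_eq, ← Nat.card_coe_set_eq,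
      Nat.card_congr (Equiv.Set.prod _ _), Nat.card_prod]
  have hrho : rho G v = E.ncard := rfl
  set n := (G.neighborSet v).ncard
  have : n * (n - 1) < 4 * (k * n) := by
    calc n * (n-1) < 4 * rho G v := hd
    _ ≤ 4 * (X.ncard * n) := by rw [hrho]; omega
    _ ≤ 4 * (k * n) := by
        have := Nat.mul_le_mul_right n hXk
        omega
  obtain ⟨m, hm⟩ : ∃ m, n = m + 1 := ⟨n - 1, by omega⟩
  rw [hm] at this hn
  simp only [Nat.add_sub_cancel] at this
  nlinarith [this, hn, hk]

/-- if `v` is large-dense and some `T ⊆ N(v)` with `|T| ≥ 2k+4` induces a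
forest in `G`, then every feasible solution for `(G,k)` contains `v`. -/
theorem stmt_15 {V : Type*} [Fintype V] (G : SimpleGraph V) (k : ℕ) (hk : 1 ≤ k) (v : V)
    (hv : LargeDense G k v)
    (T : Set V) (hT : T ⊆ G.neighborSet v) (hTcard : 2 * k + 4 ≤ T.ncard)
    (hTforest : (G.induce T).IsAcyclic)
    (X : Set V) (hX : IsFeasible G k X) :
    v ∈ X := by
  by_contra hvX
  set H := G.induce (Xᶜ : Set V) with hH
  have hvX' : v ∈ (Xᶜ : Set V) := hvX
  set v' : (Xᶜ : Set V) := ⟨v, hvX'⟩ with hv'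
  set c := H.connectedComponentMk v' with hc
  have hvsupp : v' ∈ c.supp := rfl
  -- neighbors of v not in X are in c.supp
  have hnbr : ∀ (a : V) (ha : a ∈ (Xᶜ : Set V)), G.Adj v a → H.Adj v' ⟨a, ha⟩ := by
    intro a ha hadj
    exact hadj
  have hsupp : ∀ (a : V) (ha : a ∈ (Xᶜ : Set V)), G.Adj v a → (⟨a, ha⟩ : (Xᶜ : Set V)) ∈ c.supp := by
    intro a ha hadj
    have : H.Adj (⟨a, ha⟩ : (Xᶜ : Set V)) v' := (hnbr a ha hadj).symm
    exact ConnectedComponent.sound this.reachable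
  rcases hX.2 c with hclq | htree
  · -- clique case: 3 vertices of T \ X pairwise adjacent, contradiction with forest on T
    have h3 : 3 ≤ (T \ X).ncard := by
      have h1 := Set.ncard_le_ncard_diff_add_ncard T X (Set.toFinite _)
      have h2 := hX.1
      omega
    obtain ⟨s, hsub, hscard⟩ := Set.exists_subset_card_eq h3
    obtain ⟨a, b, d, hab, had, hbd, rfl⟩ := Set.ncard_eq_three.mp hscard
    have haT : a ∈ T \ X := hsub (by simp)
    have hbT : b ∈ T \ X := hsub (by simp)
    have hdT : d ∈ T \ X := hsub (by simp)
    have haX : a ∈ (Xᶜ : Set V) := haT.2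
    have hbX : b ∈ (Xᶜ : Set V) := hbT.2
    have hdX : d ∈ (Xᶜ : Set V) := hdT.2
    have hasupp := hsupp a haX (hT haT.1)
    have hbsupp := hsupp b hbX (hT hbT.1)
    have hdsupp := hsupp d hdX (hT hdT.1)
    have hab' : G.Adj a b := hclq hasupp hbsupp (by simp [Subtype.ext_iff, hab])
    have hbd' : G.Adj b d := hclq hbsupp hdsupp (by simp [Subtype.ext_iff, hbd])
    have had' : G.Adj a d := hclq hasupp hdsupp (by simp [Subtype.ext_iff, had])
    exact no_triangle_of_acyclic hTforest
      (a := ⟨a, haT.1⟩) (b := ⟨b, hbT.1⟩) (c := ⟨d, hdT.1⟩) hab' hbd' had'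
  · -- tree case: density gives an edge u-w in N(v) avoiding X, triangle v u w in component
    obtain ⟨u, w, hu, hw, huw, huX, hwX⟩ :=
      exists_edge_avoiding G k hk v hv.1 hv.2 X hX.1
    have husupp := hsupp u huX hu
    have hwsupp := hsupp w hwX hw
    have hvu : H.Adj v' ⟨u, huX⟩ := hnbr u huX hu
    have hvw : H.Adj v' ⟨w, hwX⟩ := hnbr w hwX hw
    have huw' : H.Adj ⟨u, huX⟩ ⟨w, hwX⟩ := huw
    exact no_triangle_of_acyclic htree.IsAcyclic
      (a := ⟨v', hvsupp⟩) (b := ⟨⟨u, huX⟩, husupp⟩) (c := ⟨⟨w, hwX⟩, hwsupp⟩)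
      hvu huw' hvw
end

section
/- Let G = (V,E) be a finite simple graph, k ≥ 1 an integer, and S ⊆ V with |S| ≤ 4k such that every connected component of G − S is a clique or a tree. Let V_ld denote the set of large-dense vertices of G. Suppose that: every vertex v ∉ V_ld satisfies |N(v)| ≤ 7k; every vertex v ∈ V_ld \ S lies in a connected component of G − S that is a clique; and at most 8k connected components of G − S are cliques with at least 3 vertices. Then the number of vertices v ∈ V_ld that have at least one neighbor outside V_ld is at most 84k² + 4k. -/
open SimpleGraph

/-!
A large-dense vertex `v` with a non-large-dense neighbour `u` lies in `S`, or is one of the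
at most `7k` neighbours of some `u ∈ S` (at most `4k` choices), or `u` and `v` lie in the same
component of `G − S`. That component is then a clique, with at least `3` vertices because
`7k < deg v < |S| + |component|`; all its large-dense vertices are neighbours of `u`, so there
are at most `7k` of them, and there are at most `8k` such components. In total
`4k + 4k·7k + 8k·7k = 84k² + 4k`.
-/

theorem Set.Finite.ncard_biUnion_le_mul {α ι : Type*} {t : Set ι} (ht : t.Finite)
    {s : ι → Set α} {m : ℕ} (hs : ∀ i ∈ t, (s i).ncard ≤ m) :
    (⋃ i ∈ t, s i).ncard ≤ t.ncard * m := by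
  calc (⋃ i ∈ t, s i).ncard = (⋃ i ∈ ht.toFinset, s i).ncard := by simp
    _ ≤ ∑ i ∈ ht.toFinset, (s i).ncard := ht.toFinset.set_ncard_biUnion_le s
    _ ≤ ht.toFinset.card • m :=
        Finset.sum_le_card_nsmul _ _ _ fun i hi => hs i (by simpa using hi)
    _ = t.ncard * m := by rw [smul_eq_mul, Set.ncard_eq_toFinset_card t ht]

namespace SimpleGraph

variable {V : Type*} {G : SimpleGraph V} {S : Set V}

theorem mem_supp_connectedComponentMk_induce_compl_of_adj {v w : V} (hv : v ∉ S) (hw : w ∉ S)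
    (h : G.Adj v w) :
    (⟨w, hw⟩ : (Sᶜ : Set V)) ∈ ((G.induce Sᶜ).connectedComponentMk ⟨v, hv⟩).supp :=
  ConnectedComponent.sound (Adj.reachable (by simpa using h.symm))

theorem ncard_neighborSet_lt_ncard_add_ncard_supp [Finite V] {v : V} (hv : v ∉ S) :
    (G.neighborSet v).ncard <
      S.ncard + ((G.induce Sᶜ).connectedComponentMk ⟨v, hv⟩).supp.ncard := by
  set c := (G.induce Sᶜ).connectedComponentMk ⟨v, hv⟩
  have hsub : G.neighborSet v ⊆ S ∪ Subtype.val '' (c.supp \ {⟨v, hv⟩}) := by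
    intro w hw
    by_cases hwS : w ∈ S
    · exact Or.inl hwS
    · exact Or.inr ⟨⟨w, hwS⟩, ⟨mem_supp_connectedComponentMk_induce_compl_of_adj hv hwS hw,
        by simpa using hw.ne.symm⟩, rfl⟩
  have hvc : (⟨v, hv⟩ : (Sᶜ : Set V)) ∈ c.supp := rfl
  have hc : 0 < c.supp.ncard := (Set.ncard_pos (Set.toFinite _)).2 ⟨_, hvc⟩
  calc (G.neighborSet v).ncard ≤ (S ∪ Subtype.val '' (c.supp \ {⟨v, hv⟩})).ncard :=
        Set.ncard_le_ncard hsub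
    _ ≤ S.ncard + (Subtype.val '' (c.supp \ {⟨v, hv⟩})).ncard := Set.ncard_union_le _ _
    _ = S.ncard + (c.supp.ncard - 1) := by
        rw [Set.ncard_image_of_injective _ Subtype.val_injective,
          Set.ncard_sdiff_singleton_of_mem hvc]
    _ < S.ncard + c.supp.ncard := by omega

theorem setOf_mem_supp_subset_neighborSet_of_compIsClique
    {c : (G.induce Sᶜ).ConnectedComponent} (hc : CompIsClique (G.induce Sᶜ) c)
    {w : (Sᶜ : Set V)} (hw : w ∈ c.supp) {P : V → Prop} (hPw : ¬ P w) :
    {x | P x ∧ ∃ hx : x ∉ S, ⟨x, hx⟩ ∈ c.supp} ⊆ G.neighborSet w := by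
  rintro x ⟨hPx, hx, hxc⟩
  have hne : (⟨x, hx⟩ : (Sᶜ : Set V)) ≠ w := by
    rintro rfl
    exact hPw hPx
  simpa using (hc hxc hw hne).symm

end SimpleGraph

theorem three_le_ncard_supp_of_largeDense {V : Type*} [Finite V] {G : SimpleGraph V} {k : ℕ}
    (hk : 1 ≤ k) {S : Set V} (hScard : S.ncard ≤ 4 * k) {v : V} (hv : v ∉ S)
    (hld : LargeDense G k v) :
    3 ≤ ((G.induce Sᶜ).connectedComponentMk ⟨v, hv⟩).supp.ncard := by
  have := G.ncard_neighborSet_lt_ncard_add_ncard_supp hv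
  have := hld.1
  omega

theorem stmt_17_general {V : Type*} [Fintype V] (G : SimpleGraph V) (k : ℕ) (hk : 1 ≤ k)
    (S : Set V) (hScard : S.ncard ≤ 4 * k)
    (hsmall : ∀ v : V, ¬ LargeDense G k v → (G.neighborSet v).ncard ≤ 7 * k)
    (hcliquecomp : ∀ v : V, LargeDense G k v → ∀ (h : v ∉ S),
      CompIsClique (G.induce (Sᶜ : Set V))
        ((G.induce (Sᶜ : Set V)).connectedComponentMk ⟨v, h⟩))
    (hfewcliques :
      {c : (G.induce (Sᶜ : Set V)).ConnectedComponent |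
        CompIsClique (G.induce (Sᶜ : Set V)) c ∧ 3 ≤ c.supp.ncard}.ncard ≤ 8 * k) :
    {v : V | LargeDense G k v ∧ ∃ u : V, G.Adj v u ∧ ¬ LargeDense G k u}.ncard
      ≤ 84 * k ^ 2 + 4 * k := by
  set H := G.induce (Sᶜ : Set V)
  set I : Set V := {u | u ∈ S ∧ ¬ LargeDense G k u}
  set C : Set H.ConnectedComponent :=
    {c | (CompIsClique H c ∧ 3 ≤ c.supp.ncard) ∧ ∃ w ∈ c.supp, ¬ LargeDense G k w}
  set L : H.ConnectedComponent → Set V :=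
    fun c => {x | LargeDense G k x ∧ ∃ hx : x ∉ S, ⟨x, hx⟩ ∈ c.supp}
  have hcover : {v : V | LargeDense G k v ∧ ∃ u : V, G.Adj v u ∧ ¬ LargeDense G k u}
      ⊆ S ∪ (⋃ u ∈ I, G.neighborSet u) ∪ ⋃ c ∈ C, L c := by
    rintro v ⟨hv, u, hvu, hu⟩
    by_cases hvS : v ∈ S
    · exact Or.inl (Or.inl hvS)
    by_cases huS : u ∈ S
    · exact Or.inl (Or.inr (Set.mem_biUnion ⟨huS, hu⟩ hvu.symm))
    refine Or.inr (Set.mem_biUnion (x := H.connectedComponentMk ⟨v, hvS⟩) ?_ ⟨hv, hvS, rfl⟩)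
    exact ⟨⟨hcliquecomp v hv hvS, three_le_ncard_supp_of_largeDense hk hScard hvS hv⟩,
      ⟨u, huS⟩, mem_supp_connectedComponentMk_induce_compl_of_adj hvS huS hvu, hu⟩
  have hI : (⋃ u ∈ I, G.neighborSet u).ncard ≤ 4 * k * (7 * k) :=
    (I.toFinite.ncard_biUnion_le_mul fun u hu => hsmall u hu.2).trans <|
      Nat.mul_le_mul_right _ ((Set.ncard_le_ncard fun _ hx => hx.1).trans hScard)
  have hC : (⋃ c ∈ C, L c).ncard ≤ 8 * k * (7 * k) := by
    refine (C.toFinite.ncard_biUnion_le_mul fun c ⟨⟨hc, _⟩, w, hw, hwld⟩ => ?_).trans <|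
      Nat.mul_le_mul_right _ ((Set.ncard_le_ncard fun _ hc => hc.1).trans hfewcliques)
    exact (Set.ncard_le_ncard
      (setOf_mem_supp_subset_neighborSet_of_compIsClique hc hw hwld)).trans (hsmall _ hwld)
  calc _ ≤ (S ∪ (⋃ u ∈ I, G.neighborSet u) ∪ ⋃ c ∈ C, L c).ncard :=
        Set.ncard_le_ncard hcover
    _ ≤ S.ncard + (⋃ u ∈ I, G.neighborSet u).ncard + (⋃ c ∈ C, L c).ncard :=
        (Set.ncard_union_le _ _).trans (Nat.add_le_add_right (Set.ncard_union_le _ _) _)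
    _ ≤ 4 * k + 4 * k * (7 * k) + 8 * k * (7 * k) := by gcongr
    _ = 84 * k ^ 2 + 4 * k := by ring

/-- let `S ⊆ V` with `|S| ≤ 4k` such that every connected component of
`G − S` is a clique or a tree. Suppose every non-large-dense vertex has at most `7k`
neighbors, every large-dense vertex outside `S` lies in a clique component of `G − S`,
and at most `8k` components of `G − S` are cliques with at least 3 vertices. Then at most
`84k² + 4k` large-dense vertices have a neighbor outside the set of large-dense vertices. -/
theorem stmt_17 {V : Type*} [Fintype V] (G : SimpleGraph V) (k : ℕ) (hk : 1 ≤ k)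
    (S : Set V) (hScard : S.ncard ≤ 4 * k)
    (hS : CliquesOrTrees (G.induce (Sᶜ : Set V)))
    (hsmall : ∀ v : V, ¬ LargeDense G k v → (G.neighborSet v).ncard ≤ 7 * k)
    (hcliquecomp : ∀ v : V, LargeDense G k v → ∀ (h : v ∉ S),
      CompIsClique (G.induce (Sᶜ : Set V))
        ((G.induce (Sᶜ : Set V)).connectedComponentMk ⟨v, h⟩))
    (hfewcliques :
      {c : (G.induce (Sᶜ : Set V)).ConnectedComponent |
        CompIsClique (G.induce (Sᶜ : Set V)) c ∧ 3 ≤ c.supp.ncard}.ncard ≤ 8 * k) :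
    {v : V | LargeDense G k v ∧ ∃ u : V, G.Adj v u ∧ ¬ LargeDense G k u}.ncard
      ≤ 84 * k ^ 2 + 4 * k :=
  stmt_17_general G k hk S hScard hsmall hcliquecomp hfewcliques
end

section
/- Let V be a finite set, l ≥ 1 an integer, and for each i ∈ {1,…,l} let V_{i1}, V_{i2} ⊆ V; let f ∈ {0,1}^l. Consider the multifamily 𝒟_f of subsets of V consisting of, for each i with f_i = 0, the single set V_{i1} ∩ V_{i2}, and for each i with f_i = 1, the two sets V_{i1} and V_{i2}. Then 𝒟_f admits a system of distinct representatives (an injective choice of one element from each member of the multifamily) if and only if in the complete graph on V there exist pairwise vertex-disjoint paths P_1,…,P_l such that for each i: if f_i = 0 then P_i consists of a single vertex belonging to V_{i1} ∩ V_{i2}, and if f_i = 1 then P_i contains at least one edge and one endpoint of P_i belongs to V_{i1} while the other endpoint belongs to V_{i2}. -/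
/-!
Both sides amount to choosing, for every `i`, a pair of ends `(a i, b i)` with `a i ∈ V1 i`,
`b i ∈ V2 i`, `a i ≠ b i` when `f i = 1` and `a i = b i` when `f i = 0`, the sets `{a i, b i}`
being pairwise disjoint. For representatives these are the representatives chosen for index `i`;
for paths they are the endpoints of `P i` (reversed if necessary), and conversely in the
complete graph any such pair is joined by a path with no vertex besides its ends.
-/

open SimpleGraph

/-- The multifamily `𝒟_f` of subsets of `V`, indexed by pairs `(i, j)`: when `f i = true`
its two members for index `i` are `V1 i` (at `j = 0`) and `V2 i` (at `j = 1`); when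
`f i = false` its single member for index `i` is `V1 i ∩ V2 i` (at `j = 0`, with index
`(i, 1)` excluded from the index set of the multifamily). -/
def Dfam {V : Type*} {l : ℕ} (V1 V2 : Fin l → Set V) (f : Fin l → Bool) :
    Fin l × Fin 2 → Set V :=
  fun p => if f p.1 then (if p.2 = 0 then V1 p.1 else V2 p.1) else V1 p.1 ∩ V2 p.1

structure IsEndSystem {ι V : Type*} (V1 V2 : ι → Set V) (f : ι → Bool) (a b : ι → V) :
    Prop where
  spec : ∀ i, if f i then a i ≠ b i ∧ a i ∈ V1 i ∧ b i ∈ V2 i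
    else a i = b i ∧ a i ∈ V1 i ∩ V2 i
  pairwise_disjoint : Pairwise fun i j => Disjoint ({a i, b i} : Set V) {a j, b j}

section Paths

variable {V : Type*}

theorem SimpleGraph.Walk.IsPath.length_eq_zero_iff {G : SimpleGraph V} {u v : V}
    {p : G.Walk u v} (hp : p.IsPath) : p.length = 0 ↔ u = v :=
  ⟨Walk.eq_of_length_eq_zero, by
    rintro rfl
    exact Walk.length_eq_zero_iff.mpr (Walk.isPath_iff_nil.mp hp)⟩

theorem exists_isPath_top_support_subset (u v : V) :
    ∃ p : (⊤ : SimpleGraph V).Walk u v,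
      p.IsPath ∧ ∀ x ∈ p.support, x ∈ ({u, v} : Set V) := by
  by_cases huv : u = v
  · subst huv
    exact ⟨Walk.nil, by simp, by simp⟩
  · have hadj : (⊤ : SimpleGraph V).Adj u v := (top_adj u v).mpr huv
    exact ⟨hadj.toWalk, hadj.isPath_toWalk, by simp [hadj.support_toWalk]⟩

end Paths

section Representatives

variable {V : Type*} {l : ℕ} {V1 V2 : Fin l → Set V} {f : Fin l → Bool}

theorem exists_isEndSystem_of_injective
    {g : {p : Fin l × Fin 2 // f p.1 = true ∨ p.2 = 0} → V}
    (hg : Function.Injective g) (hmem : ∀ p, g p ∈ Dfam V1 V2 f p.1) :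
    ∃ a b, IsEndSystem V1 V2 f a b := by
  let first (i : Fin l) : {p : Fin l × Fin 2 // f p.1 = true ∨ p.2 = 0} :=
    ⟨(i, 0), Or.inr rfl⟩
  let second (i : Fin l) : {p : Fin l × Fin 2 // f p.1 = true ∨ p.2 = 0} :=
    ⟨(i, if f i then 1 else 0), by cases f i <;> simp⟩
  have ends_mem_range : ∀ k, ∀ x ∈ ({g (first k), g (second k)} : Set V),
      ∃ p, p.1.1 = k ∧ g p = x := by
    rintro k x (rfl | rfl) <;> exact ⟨_, rfl, rfl⟩
  refine ⟨g ∘ first, g ∘ second, fun i => ?_, fun i j hij => ?_⟩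
  · have h0 := hmem (first i)
    have h1 := hmem (second i)
    by_cases hf : f i <;> simp only [Dfam, first, second, hf, if_true, Bool.false_eq_true,
      if_false, Function.comp_apply] at h0 h1 ⊢
    · refine ⟨fun h => ?_, h0, h1⟩
      simpa using congrArg (fun p => p.1.2) (hg h)
    · exact ⟨trivial, h0⟩
  · refine Set.disjoint_left.mpr fun x hxi hxj => hij ?_
    obtain ⟨p, rfl, rfl⟩ := ends_mem_range i x hxi
    obtain ⟨q, rfl, hq⟩ := ends_mem_range j _ hxj
    rw [hg hq]

theorem IsEndSystem.exists_injective {a b : Fin l → V} (h : IsEndSystem V1 V2 f a b) :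
    ∃ g : {p : Fin l × Fin 2 // f p.1 = true ∨ p.2 = 0} → V,
      Function.Injective g ∧ ∀ p, g p ∈ Dfam V1 V2 f p.1 := by
  let g (p : {p : Fin l × Fin 2 // f p.1 = true ∨ p.2 = 0}) : V :=
    if p.1.2 = 0 then a p.1.1 else b p.1.1
  have g_mem_ends : ∀ p, g p ∈ ({a p.1.1, b p.1.1} : Set V) := by
    intro p
    by_cases hj : p.1.2 = 0 <;> simp [g, hj]
  refine ⟨g, ?_, ?_⟩
  · rintro ⟨⟨i, j⟩, hp⟩ ⟨⟨i', j'⟩, hq⟩ hpq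
    obtain rfl : i = i' := by
      by_contra hii
      exact Set.disjoint_left.mp (h.pairwise_disjoint hii) (g_mem_ends _)
        (hpq ▸ g_mem_ends ⟨(i', j'), hq⟩)
    have hab := h.spec i
    -- Distinct indices `(i, 0)` and `(i, 1)` both occur only when `f i = 1`, where `a i ≠ b i`.
    by_cases hf : f i <;> simp only [hf, if_true, Bool.false_eq_true, if_false,
      false_or] at hab hp hq
    · fin_cases j <;> fin_cases j' <;> simp_all [g]
    · subst hp hq
      rfl
  · rintro ⟨⟨i, j⟩, hp⟩
    have hab := h.spec i
    by_cases hf : f i <;> simp only [hf, if_true, Bool.false_eq_true, if_false,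
      false_or] at hab hp
    · fin_cases j <;> simp [g, Dfam, hf, hab.2]
    · simp [g, Dfam, hf, hp, hab.2]

end Representatives

section DisjointPaths

variable {ι V : Type*} {V1 V2 : ι → Set V} {f : ι → Bool}

theorem exists_isEndSystem_of_disjoint_paths {a b : ι → V}
    (P : ∀ i, (⊤ : SimpleGraph V).Walk (a i) (b i)) (hpath : ∀ i, (P i).IsPath)
    (hdisj : ∀ i j, i ≠ j → ∀ x, x ∈ (P i).support → x ∉ (P j).support)
    (hends : ∀ i, if f i then
        1 ≤ (P i).length ∧ ((a i ∈ V1 i ∧ b i ∈ V2 i) ∨ (a i ∈ V2 i ∧ b i ∈ V1 i))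
      else (P i).length = 0 ∧ a i ∈ V1 i ∩ V2 i) :
    ∃ c d, IsEndSystem V1 V2 f c d := by
  have oriented : ∀ i, ∃ c d : V, ({c, d} : Set V) = {a i, b i} ∧
      if f i then c ≠ d ∧ c ∈ V1 i ∧ d ∈ V2 i else c = d ∧ c ∈ V1 i ∩ V2 i := by
    intro i
    have hi := hends i
    by_cases hf : f i <;> simp only [hf, if_true, Bool.false_eq_true, if_false] at hi ⊢
    · have hne : a i ≠ b i := by
        rw [Ne, ← (hpath i).length_eq_zero_iff]
        omega
      rcases hi.2 with horient | ⟨ha, hb⟩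
      · exact ⟨a i, b i, rfl, hne, horient⟩
      · exact ⟨b i, a i, Set.pair_comm _ _, hne.symm, hb, ha⟩
    · exact ⟨a i, b i, rfl, (P i).eq_of_length_eq_zero hi.1, hi.2⟩
  choose c d hcd hspec using oriented
  have ends_subset : ∀ k, ∀ x ∈ ({c k, d k} : Set V), x ∈ (P k).support := by
    intro k x hx
    rw [hcd] at hx
    rcases hx with rfl | rfl
    exacts [(P k).start_mem_support, (P k).end_mem_support]
  refine ⟨c, d, hspec, fun i j hij => Set.disjoint_left.mpr fun x hxi hxj => ?_⟩
  exact hdisj i j hij x (ends_subset i x hxi) (ends_subset j x hxj)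

theorem IsEndSystem.exists_disjoint_paths {a b : ι → V} (h : IsEndSystem V1 V2 f a b) :
    ∃ P : ∀ i, (⊤ : SimpleGraph V).Walk (a i) (b i),
      (∀ i, (P i).IsPath) ∧
      (∀ i j, i ≠ j → ∀ x, x ∈ (P i).support → x ∉ (P j).support) ∧
      (∀ i, if f i then
          1 ≤ (P i).length ∧ ((a i ∈ V1 i ∧ b i ∈ V2 i) ∨ (a i ∈ V2 i ∧ b i ∈ V1 i))
        else (P i).length = 0 ∧ a i ∈ V1 i ∩ V2 i) := by
  choose P hpath hsupp using fun i => exists_isPath_top_support_subset (a i) (b i)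
  refine ⟨P, hpath, fun i j hij x hxi hxj => ?_, fun i => ?_⟩
  · exact Set.disjoint_left.mp (h.pairwise_disjoint hij) (hsupp i x hxi) (hsupp j x hxj)
  · have hi := h.spec i
    by_cases hf : f i <;> simp only [hf, if_true, Bool.false_eq_true, if_false] at hi ⊢
    · refine ⟨Nat.one_le_iff_ne_zero.mpr ?_, Or.inl hi.2⟩
      rw [Ne, (hpath i).length_eq_zero_iff]
      exact hi.1
    · exact ⟨(hpath i).length_eq_zero_iff.mpr hi.1, hi.2⟩

end DisjointPaths

theorem stmt_18_general {V : Type*} (l : ℕ)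
    (V1 V2 : Fin l → Set V) (f : Fin l → Bool) :
    (∃ g : {p : Fin l × Fin 2 // f p.1 = true ∨ p.2 = 0} → V,
        Function.Injective g ∧ ∀ p, g p ∈ Dfam V1 V2 f p.1) ↔
      (∃ (a b : Fin l → V) (P : ∀ i, (⊤ : SimpleGraph V).Walk (a i) (b i)),
        (∀ i, (P i).IsPath) ∧
        (∀ i j, i ≠ j → ∀ x, x ∈ (P i).support → x ∉ (P j).support) ∧
        (∀ i, if f i then
            1 ≤ (P i).length ∧
              ((a i ∈ V1 i ∧ b i ∈ V2 i) ∨ (a i ∈ V2 i ∧ b i ∈ V1 i))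
          else (P i).length = 0 ∧ a i ∈ V1 i ∩ V2 i)) := by
  constructor
  · rintro ⟨g, hg, hmem⟩
    obtain ⟨a, b, h⟩ := exists_isEndSystem_of_injective hg hmem
    exact ⟨a, b, h.exists_disjoint_paths⟩
  · rintro ⟨a, b, P, hpath, hdisj, hends⟩
    obtain ⟨c, d, h⟩ := exists_isEndSystem_of_disjoint_paths P hpath hdisj hends
    exact h.exists_injective

/-- the multifamily `𝒟_f` admits a system of distinct representatives iff
there exist pairwise vertex-disjoint paths `P₁, …, P_l` in the complete graph on `V` such
that for each `i`: if `f i = 0` then `P i` is a single vertex lying in `V1 i ∩ V2 i`, and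
if `f i = 1` then `P i` has at least one edge, with one endpoint in `V1 i` and the other
in `V2 i`. -/
theorem stmt_18 {V : Type*} [Fintype V] (l : ℕ) (hl : 1 ≤ l)
    (V1 V2 : Fin l → Set V) (f : Fin l → Bool) :
    (∃ g : {p : Fin l × Fin 2 // f p.1 = true ∨ p.2 = 0} → V,
        Function.Injective g ∧ ∀ p, g p ∈ Dfam V1 V2 f p.1) ↔
      (∃ (a b : Fin l → V) (P : ∀ i, (⊤ : SimpleGraph V).Walk (a i) (b i)),
        (∀ i, (P i).IsPath) ∧
        (∀ i j, i ≠ j → ∀ x, x ∈ (P i).support → x ∉ (P j).support) ∧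
        (∀ i, if f i then
            1 ≤ (P i).length ∧
              ((a i ∈ V1 i ∧ b i ∈ V2 i) ∨ (a i ∈ V2 i ∧ b i ∈ V1 i))
          else (P i).length = 0 ∧ a i ∈ V1 i ∩ V2 i)) :=
  stmt_18_general l V1 V2 f
end

section
/- Let V be a finite set, l ≥ 1 an integer, and V_{i1}, V_{i2} ⊆ V for each i ∈ {1,…,l}. Suppose that in the complete graph on V there exist pairwise vertex-disjoint paths P_1,…,P_l such that each P_i has one endpoint in V_{i1} and the other endpoint in V_{i2}, and at least one of the paths contains an edge. Then there exist pairwise vertex-disjoint paths Q_1,…,Q_l in the complete graph on V such that each Q_i has one endpoint in V_{i1} and the other endpoint in V_{i2}, and the vertex sets of Q_1,…,Q_l together cover all of V (equivalently, the total number of edges of Q_1,…,Q_l equals |V| − l). -/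
open SimpleGraph

private theorem stmt_19_aux {V : Type*} [Fintype V] [DecidableEq V] (l : ℕ)
    (V1 V2 : Fin l → Set V) :
    ∀ (n : ℕ) (a b : Fin l → V) (P : ∀ i, (⊤ : SimpleGraph V).Walk (a i) (b i)),
      (∀ i, (P i).IsPath) →
      (∀ i j, i ≠ j → ∀ x, x ∈ (P i).support → x ∉ (P j).support) →
      (∀ i, (a i ∈ V1 i ∧ b i ∈ V2 i) ∨ (a i ∈ V2 i ∧ b i ∈ V1 i)) →
      (∃ i, 1 ≤ (P i).length) →
      {x : V | ∀ i, x ∉ (P i).support}.ncard ≤ n →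
      ∃ (a' b' : Fin l → V) (Q : ∀ i, (⊤ : SimpleGraph V).Walk (a' i) (b' i)),
        (∀ i, (Q i).IsPath) ∧
        (∀ i j, i ≠ j → ∀ x, x ∈ (Q i).support → x ∉ (Q j).support) ∧
        (∀ i, (a' i ∈ V1 i ∧ b' i ∈ V2 i) ∨ (a' i ∈ V2 i ∧ b' i ∈ V1 i)) ∧
        (∀ x : V, ∃ i, x ∈ (Q i).support) := by
  intro n
  induction n with
  | zero =>
    intro a b P hpath hdisj hend hedge hcard
    refine ⟨a, b, P, hpath, hdisj, hend, ?_⟩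
    have hS : {x : V | ∀ i, x ∉ (P i).support} = ∅ :=
      (Set.ncard_eq_zero (Set.toFinite _)).mp (Nat.le_zero.mp hcard)
    intro x
    by_contra h
    push_neg at h
    have hx : x ∈ ({x : V | ∀ i, x ∉ (P i).support}) := h
    rw [hS] at hx; exact hx
  | succ n ih =>
    intro a b P hpath hdisj hend hedge hcard
    by_cases hemp : {x : V | ∀ i, x ∉ (P i).support} = ∅
    · refine ⟨a, b, P, hpath, hdisj, hend, ?_⟩
      intro x; by_contra h; push_neg at h
      have hx : x ∈ ({x : V | ∀ i, x ∉ (P i).support}) := h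
      rw [hemp] at hx; exact hx
    · obtain ⟨x, hx⟩ := Set.nonempty_iff_ne_empty.mpr hemp
      have hx' : ∀ i, x ∉ (P i).support := hx
      obtain ⟨i₀, hi₀⟩ := hedge
      have hnn : ¬ (P i₀).Nil := by
        rw [SimpleGraph.Walk.not_nil_iff_lt_length]; omega
      obtain ⟨c, hac, q, hPq⟩ := SimpleGraph.Walk.not_nil_iff.mp hnn
      have hsupP : (P i₀).support = a i₀ :: q.support := by
        rw [hPq, SimpleGraph.Walk.support_cons]
      have hxP : x ∉ (P i₀).support := hx' i₀
      have hax : a i₀ ≠ x := by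
        intro h; exact hxP (h ▸ (P i₀).start_mem_support)
      have hxc : x ≠ c := by
        intro h
        apply hxP
        rw [hsupP, h]
        exact List.mem_cons_of_mem _ q.start_mem_support
      have h1 : (⊤ : SimpleGraph V).Adj (a i₀) x := by simp [hax]
      have h2 : (⊤ : SimpleGraph V).Adj x c := by simp [hxc]
      set W : (⊤ : SimpleGraph V).Walk (a i₀) (b i₀) :=
        SimpleGraph.Walk.cons h1 (SimpleGraph.Walk.cons h2 q) with hW
      set Q : ∀ i, (⊤ : SimpleGraph V).Walk (a i) (b i) :=
        Function.update P i₀ W with hQ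
      have hQi₀ : Q i₀ = W := Function.update_self _ _ _
      have hQne : ∀ i, i ≠ i₀ → Q i = P i := fun i h => Function.update_of_ne h _ _
      -- support characterization
      have hsupW : ∀ y, y ∈ W.support ↔ y = x ∨ y ∈ (P i₀).support := by
        intro y
        rw [hW, hsupP]
        simp [SimpleGraph.Walk.support_cons]
        tauto
      have hsup : ∀ i y, y ∈ (Q i).support ↔ (i = i₀ ∧ y = x) ∨ y ∈ (P i).support := by
        intro i y
        by_cases h : i = i₀
        · subst h
          rw [hQi₀, hsupW]; tauto
        · rw [hQne i h]; tauto
      -- path property of W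
      have hPi₀path := hpath i₀
      rw [hPq] at hPi₀path
      have hqpath : q.IsPath := hPi₀path.of_cons
      have haq : a i₀ ∉ q.support := by
        have := hPi₀path.support_nodup
        rw [SimpleGraph.Walk.support_cons] at this
        exact (List.nodup_cons.mp this).1
      have hxq : x ∉ q.support := by
        intro h; apply hxP; rw [hsupP]; exact List.mem_cons_of_mem _ h
      have hWpath : W.IsPath := by
        rw [hW]
        apply SimpleGraph.Walk.IsPath.cons
        · exact SimpleGraph.Walk.IsPath.cons hqpath hxq
        · rw [SimpleGraph.Walk.support_cons]
          intro h
          rcases List.mem_cons.mp h with h | h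
          · exact hax h
          · exact haq h
      -- apply IH
      apply ih a b Q
      · intro i
        by_cases h : i = i₀
        · subst h; rw [hQi₀]; exact hWpath
        · rw [hQne i h]; exact hpath i
      · intro i j hij y hyi hyj
        rw [hsup] at hyi hyj
        rcases hyi with ⟨hi, rfl⟩ | hyi
        · rcases hyj with ⟨hj, _⟩ | hyj
          · exact hij (hi.trans hj.symm)
          · exact hx' j hyj
        · rcases hyj with ⟨hj, rfl⟩ | hyj
          · exact hx' i hyi
          · exact hdisj i j hij y hyi hyj
      · exact hend
      · exact ⟨i₀, by rw [hQi₀, hW]; simp⟩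
      · have hsub : {y : V | ∀ i, y ∉ (Q i).support} ⊆ {y : V | ∀ i, y ∉ (P i).support} := by
          intro y hy i
          intro h
          exact hy i ((hsup i y).mpr (Or.inr h))
        have hxnot : x ∉ {y : V | ∀ i, y ∉ (Q i).support} := by
          intro h
          exact h i₀ ((hsup i₀ x).mpr (Or.inl ⟨rfl, rfl⟩))
        have hss : {y : V | ∀ i, y ∉ (Q i).support} ⊂ {y : V | ∀ i, y ∉ (P i).support} :=
          ⟨hsub, fun h => hxnot (h hx)⟩
        have := Set.ncard_lt_ncard hss (Set.toFinite _)
        omega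

/-- if in the complete graph on `V` there are pairwise vertex-disjoint paths
`P₁, …, P_l` with each `P i` having one endpoint in `V1 i` and the other in `V2 i`, and at
least one of the paths contains an edge, then there are pairwise vertex-disjoint paths
`Q₁, …, Q_l` with the same endpoint property whose vertex sets together cover all of `V`. -/
theorem stmt_19 {V : Type*} [Fintype V] (l : ℕ) (hl : 1 ≤ l)
    (V1 V2 : Fin l → Set V)
    (a b : Fin l → V) (P : ∀ i, (⊤ : SimpleGraph V).Walk (a i) (b i))
    (hpath : ∀ i, (P i).IsPath)
    (hdisj : ∀ i j, i ≠ j → ∀ x, x ∈ (P i).support → x ∉ (P j).support)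
    (hend : ∀ i, (a i ∈ V1 i ∧ b i ∈ V2 i) ∨ (a i ∈ V2 i ∧ b i ∈ V1 i))
    (hedge : ∃ i, 1 ≤ (P i).length) :
    ∃ (a' b' : Fin l → V) (Q : ∀ i, (⊤ : SimpleGraph V).Walk (a' i) (b' i)),
      (∀ i, (Q i).IsPath) ∧
      (∀ i j, i ≠ j → ∀ x, x ∈ (Q i).support → x ∉ (Q j).support) ∧
      (∀ i, (a' i ∈ V1 i ∧ b' i ∈ V2 i) ∨ (a' i ∈ V2 i ∧ b' i ∈ V1 i)) ∧
      (∀ x : V, ∃ i, x ∈ (Q i).support) := by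
  classical
  exact stmt_19_aux l V1 V2 _ a b P hpath hdisj hend hedge le_rfl
end
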